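/- arXiv:1102.4921 — 3 statements merged into one kernel-verified Lean document; each statement's English description precedes it below -/
import Mathlib

section
/- Impossibility of one-point almost sure localization (claim of Remark 1): Almost surely, there is no function Z : (0,∞) → ℤ^d such that u(t,Z(t))/U(t) → 1 as t → ∞. In particular, at least two sites are needed to carry the total mass in an almost sure limit theorem. -/
open MeasureTheory Filter Topology ProbabilityTheory

namespace PAM

/-- ℓ¹ norm of a lattice point, as a natural number. -/
def normZ {d : ℕ} (z : Fin d → ℤ) : ℕ := ∑ i, (z i).natAbs

/-- ℓ¹ norm of a lattice point, as a real number. -/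
noncomputable def norm1 {d : ℕ} (z : Fin d → ℤ) : ℝ := normZ z

/-- ℓ¹ norm on `ℝ^d`. -/
noncomputable def norm1R {d : ℕ} (x : Fin d → ℝ) : ℝ := ∑ i, |x i|

/-- The set of nearest-neighbour lattice paths of length `n` starting at the origin and
passing through `z`. -/
def pathsThrough (d n : ℕ) (z : Fin d → ℤ) : Set (Fin (n + 1) → Fin d → ℤ) :=
  {y | y 0 = 0 ∧ (∀ i : Fin n, normZ (y i.succ - y i.castSucc) = 1) ∧ ∃ i, y i = z}

/-- `N(n,z)`: the number of nearest-neighbour lattice paths of length `n` starting at the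
origin and passing through `z`. -/
noncomputable def Npath (d n : ℕ) (z : Fin d → ℤ) : ℕ := (pathsThrough d n z).ncard

/-- `η(n,z) = log N(n,z)`. -/
noncomputable def etaN (d n : ℕ) (z : Fin d → ℤ) : ℝ := Real.log (Npath d n z)

/-- `η(z) = log N(z)` where `N(z) = N(|z|,z)`. -/
noncomputable def eta {d : ℕ} (z : Fin d → ℤ) : ℝ := etaN d (normZ z) z

/-- The functional `Φ_t` associated with the potential `ξ`. -/
noncomputable def Phi {d : ℕ} (ξ : (Fin d → ℤ) → ℝ) (t : ℝ) (z : Fin d → ℤ) : ℝ :=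
  if norm1 z ≤ t * ξ z then ξ z - norm1 z / t * Real.log (ξ z) + eta z / t else 0

/-- The discrete Laplacian on `ℤ^d`. -/
noncomputable def lap {d : ℕ} (f : (Fin d → ℤ) → ℝ) (z : Fin d → ℤ) : ℝ :=
  ∑ i : Fin d, ((f (z + fun j => if j = i then 1 else 0) - f z)
              + (f (z - fun j => if j = i then 1 else 0) - f z))

/-- `X` is Pareto(α)-distributed under `P`. -/
def IsPareto {Ω : Type*} [MeasurableSpace Ω] (P : Measure Ω) (α : ℝ) (X : Ω → ℝ) : Prop :=
  (∀ x : ℝ, 1 ≤ x → P {ω | X ω ≤ x} = ENNReal.ofReal (1 - x ^ (-α))) ∧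
  ∀ x : ℝ, x < 1 → P {ω | X ω ≤ x} = 0

/-- `u` is a nonnegative solution of the parabolic Anderson problem with potential `ξ` and
localized initial condition, whose total mass is finite at all times. -/
structure IsPAMSolution {d : ℕ} (ξ : (Fin d → ℤ) → ℝ) (u : ℝ → (Fin d → ℤ) → ℝ) : Prop where
  nonneg : ∀ t, 0 < t → ∀ z, 0 ≤ u t z
  pde : ∀ z, ∀ t, 0 < t → HasDerivAt (fun s => u s z) (lap (u t) z + ξ z * u t z) t
  init : ∀ z : Fin d → ℤ,
    Tendsto (fun t => u t z) (nhdsWithin 0 (Set.Ioi 0)) (nhds (if z = 0 then 1 else 0))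
  summable : ∀ t, 0 < t → Summable fun z => u t z

/-- The total mass `U(t)` of a solution. -/
noncomputable def totalMass {d : ℕ} (u : ℝ → (Fin d → ℤ) → ℝ) (t : ℝ) : ℝ := ∑' z, u t z

/-- The `i`-th largest value of the potential `ξ` in the centred ℓ¹-ball of radius `r`. -/
noncomputable def orderStat {d : ℕ} (ξ : (Fin d → ℤ) → ℝ) (r : ℝ) (i : ℕ) : ℝ :=
  sSup {y : ℝ | i ≤ Set.ncard {z : Fin d → ℤ | norm1 z ≤ r ∧ y ≤ ξ z}}

/-- `q = d/(α−d)`. -/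
noncomputable def qex (d : ℕ) (α : ℝ) : ℝ := d / (α - d)

/-- `r_t = (t / log t)^{q+1}`. -/
noncomputable def rt (d : ℕ) (α : ℝ) (t : ℝ) : ℝ := (t / Real.log t) ^ (qex d α + 1)

/-- `a_t = (t / log t)^{q}`. -/
noncomputable def amt (d : ℕ) (α : ℝ) (t : ℝ) : ℝ := (t / Real.log t) ^ qex d α

/-- The Euler Beta function. -/
noncomputable def betaFn (a b : ℝ) : ℝ := Real.Gamma a * Real.Gamma b / Real.Gamma (a + b)

/-- `θ = 2^d B(α−d,d) / (q^d (d−1)!)`. -/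
noncomputable def theta (d : ℕ) (α : ℝ) : ℝ :=
  2 ^ d * betaFn (α - d) d / (qex d α ^ d * (Nat.factorial (d - 1) : ℝ))

/-! ### Auxiliary lemmas -/

section AuxCalc

/-- A Grönwall-type helper: product rule with an exponential factor. -/
lemma hasDerivAt_exp_mul (c : ℝ) {f : ℝ → ℝ} {g : ℝ} {s : ℝ} (hf : HasDerivAt f g s) :
    HasDerivAt (fun r => Real.exp (c * r) * f r) (Real.exp (c * s) * (g + c * f s)) s := by
  have h1 : HasDerivAt (fun r : ℝ => Real.exp (c * r)) (Real.exp (c * s) * c) s := by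
    simpa using ((hasDerivAt_id s).const_mul c).exp
  have h2 : HasDerivAt (fun r => Real.exp (c * r) * f r)
      (Real.exp (c * s) * c * f s + Real.exp (c * s) * g) s := h1.mul hf
  convert h2 using 1
  ring

/-- Grönwall upper bound. -/
lemma gronwall_upper {f g : ℝ → ℝ} {c a b : ℝ} (hab : a ≤ b)
    (hderiv : ∀ s ∈ Set.Icc a b, HasDerivAt f (g s) s)
    (hle : ∀ s ∈ Set.Icc a b, g s ≤ c * f s) :
    f b ≤ Real.exp (c * (b - a)) * f a := by
  have key : AntitoneOn (fun s => Real.exp (-c * s) * f s) (Set.Icc a b) := by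
    apply antitoneOn_of_deriv_nonpos (convex_Icc a b)
    · intro s hs
      exact ((hasDerivAt_exp_mul (-c) (hderiv s hs)).continuousAt).continuousWithinAt
    · intro s hs
      rw [interior_Icc] at hs
      exact ((hasDerivAt_exp_mul (-c) (hderiv s (Set.mem_Icc_of_Ioo hs))).differentiableAt).differentiableWithinAt
    · intro s hs
      rw [interior_Icc] at hs
      have hs' : s ∈ Set.Icc a b := Set.mem_Icc_of_Ioo hs
      rw [(hasDerivAt_exp_mul (-c) (hderiv s hs')).deriv]
      have h1 := hle s hs'
      have h2 := (Real.exp_pos (-c * s)).le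
      nlinarith
  have h2 := key (Set.left_mem_Icc.2 hab) (Set.right_mem_Icc.2 hab) hab
  have h3 : Real.exp (c * b) * (Real.exp (-c * b) * f b) ≤
      Real.exp (c * b) * (Real.exp (-c * a) * f a) :=
    mul_le_mul_of_nonneg_left h2 (Real.exp_pos _).le
  calc f b = Real.exp (c * b) * (Real.exp (-c * b) * f b) := by
        rw [← mul_assoc, ← Real.exp_add]; simp
    _ ≤ Real.exp (c * b) * (Real.exp (-c * a) * f a) := h3
    _ = Real.exp (c * (b - a)) * f a := by rw [← mul_assoc, ← Real.exp_add]; ring_nf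

/-- Grönwall lower bound. -/
lemma gronwall_lower {f g : ℝ → ℝ} {c a b : ℝ} (hab : a ≤ b)
    (hderiv : ∀ s ∈ Set.Icc a b, HasDerivAt f (g s) s)
    (hle : ∀ s ∈ Set.Icc a b, c * f s ≤ g s) :
    Real.exp (c * (b - a)) * f a ≤ f b := by
  have key : MonotoneOn (fun s => Real.exp (-c * s) * f s) (Set.Icc a b) := by
    apply monotoneOn_of_deriv_nonneg (convex_Icc a b)
    · intro s hs
      exact ((hasDerivAt_exp_mul (-c) (hderiv s hs)).continuousAt).continuousWithinAt
    · intro s hs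
      rw [interior_Icc] at hs
      exact ((hasDerivAt_exp_mul (-c) (hderiv s (Set.mem_Icc_of_Ioo hs))).differentiableAt).differentiableWithinAt
    · intro s hs
      rw [interior_Icc] at hs
      have hs' : s ∈ Set.Icc a b := Set.mem_Icc_of_Ioo hs
      rw [(hasDerivAt_exp_mul (-c) (hderiv s hs')).deriv]
      have h1 := hle s hs'
      have h2 := (Real.exp_pos (-c * s)).le
      nlinarith
  have h2 := key (Set.left_mem_Icc.2 hab) (Set.right_mem_Icc.2 hab) hab
  have h3 : Real.exp (c * b) * (Real.exp (-c * a) * f a) ≤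
      Real.exp (c * b) * (Real.exp (-c * b) * f b) :=
    mul_le_mul_of_nonneg_left h2 (Real.exp_pos _).le
  calc Real.exp (c * (b - a)) * f a = Real.exp (c * b) * (Real.exp (-c * a) * f a) := by
        rw [← mul_assoc, ← Real.exp_add]; ring_nf
    _ ≤ Real.exp (c * b) * (Real.exp (-c * b) * f b) := h3
    _ = f b := by rw [← mul_assoc, ← Real.exp_add]; simp

/-- Positivity from a strictly positive derivative. -/
lemma pos_of_deriv_pos {f g : ℝ → ℝ} {a b : ℝ} (hab : a < b)
    (hderiv : ∀ s ∈ Set.Icc a b, HasDerivAt f (g s) s)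
    (hpos : ∀ s ∈ Set.Ioo a b, 0 < g s) (hfa : 0 ≤ f a) : 0 < f b := by
  have key : StrictMonoOn f (Set.Icc a b) := by
    apply strictMonoOn_of_deriv_pos (convex_Icc a b)
    · exact fun s hs => (hderiv s hs).continuousAt.continuousWithinAt
    · intro s hs
      rw [interior_Icc] at hs
      rw [(hderiv s (Set.mem_Icc_of_Ioo hs)).deriv]
      exact hpos s hs
  have := key (Set.left_mem_Icc.2 hab.le) (Set.right_mem_Icc.2 hab.le) hab
  linarith

end AuxCalc

section AuxLattice

variable {d : ℕ}

lemma normZ_eq_zero_iff {z : Fin d → ℤ} : normZ z = 0 ↔ z = 0 := by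
  constructor
  · intro h
    funext i
    have h2 := Finset.sum_eq_zero_iff.1 h i (Finset.mem_univ i)
    simpa [Int.natAbs_eq_zero] using h2
  · rintro rfl
    simp [normZ]

lemma lap_add (f : (Fin d → ℤ) → ℝ) (z : Fin d → ℤ) :
    lap f z + 2 * d * f z = ∑ i : Fin d,
      (f (z + fun j => if j = i then 1 else 0) + f (z - fun j => if j = i then 1 else 0)) := by
  have h : ∀ i : Fin d,
      ((f (z + fun j => if j = i then 1 else 0) - f z)
        + (f (z - fun j => if j = i then 1 else 0) - f z))
      = (f (z + fun j => if j = i then 1 else 0) + f (z - fun j => if j = i then 1 else 0))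
        - 2 * f z := by intro i; ring
  simp only [lap, h, Finset.sum_sub_distrib, Finset.sum_const, Finset.card_univ,
    Fintype.card_fin, nsmul_eq_mul]
  ring

lemma lap_add_nonneg {f : (Fin d → ℤ) → ℝ} (hf : ∀ w, 0 ≤ f w) (z : Fin d → ℤ) :
    0 ≤ lap f z + 2 * d * f z := by
  rw [lap_add]
  exact Finset.sum_nonneg fun i _ => add_nonneg (hf _) (hf _)

lemma term_le_lap_add {f : (Fin d → ℤ) → ℝ} (hf : ∀ w, 0 ≤ f w) (z : Fin d → ℤ) (i : Fin d) :
    f (z + fun j => if j = i then 1 else 0) ≤ lap f z + 2 * d * f z ∧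
    f (z - fun j => if j = i then 1 else 0) ≤ lap f z + 2 * d * f z := by
  rw [lap_add]
  have hterm : (f (z + fun j => if j = i then 1 else 0)
      + f (z - fun j => if j = i then 1 else 0)) ≤ ∑ k : Fin d,
      (f (z + fun j => if j = k then 1 else 0) + f (z - fun j => if j = k then 1 else 0)) :=
    Finset.single_le_sum (f := fun k : Fin d => f (z + fun j => if j = k then 1 else 0)
      + f (z - fun j => if j = k then 1 else 0))
      (fun k _ => add_nonneg (hf _) (hf _)) (Finset.mem_univ i)
  constructor
  · have := hf (z - fun j => if j = i then 1 else 0); linarith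
  · have := hf (z + fun j => if j = i then 1 else 0); linarith

end AuxLattice

section Det

variable {d : ℕ} {ξ : (Fin d → ℤ) → ℝ} {u : ℝ → (Fin d → ℤ) → ℝ}

lemma u_deriv_mem (hsol : IsPAMSolution ξ u) (z : Fin d → ℤ) {a b : ℝ} (ha : 0 < a) :
    ∀ s ∈ Set.Icc a b, HasDerivAt (fun r => u r z) (lap (u s) z + ξ z * u s z) s :=
  fun s hs => hsol.pde z s (lt_of_lt_of_le ha hs.1)

lemma u_lower (hsol : IsPAMSolution ξ u) (z : Fin d → ℤ) {a b : ℝ} (ha : 0 < a) (hab : a ≤ b) :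
    Real.exp ((ξ z - 2 * d) * (b - a)) * u a z ≤ u b z := by
  apply gronwall_lower hab (u_deriv_mem hsol z ha)
  intro s hs
  have hs0 : 0 < s := lt_of_lt_of_le ha hs.1
  have h1 : 0 ≤ lap (u s) z + 2 * d * u s z := lap_add_nonneg (fun w => hsol.nonneg s hs0 w) z
  linarith

lemma u_pos (hsol : IsPAMSolution ξ u) (hξ1 : ∀ z, 1 ≤ ξ z) :
    ∀ (z : Fin d → ℤ) (t : ℝ), 0 < t → 0 < u t z := by
  have key : ∀ (n : ℕ) (z : Fin d → ℤ), normZ z = n → ∀ t : ℝ, 0 < t → 0 < u t z := by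
    intro n
    induction n with
    | zero =>
      intro z hz t ht
      have hz0 : z = 0 := normZ_eq_zero_iff.1 hz
      subst hz0
      have h1 : Tendsto (fun s => u s 0) (nhdsWithin 0 (Set.Ioi 0)) (nhds 1) := by
        simpa using hsol.init 0
      have h2 : ∀ᶠ s in nhdsWithin 0 (Set.Ioi 0), 0 < u s 0 :=
        h1.eventually (lt_mem_nhds zero_lt_one)
      have h3 : Set.Ioo (0 : ℝ) t ∈ nhdsWithin 0 (Set.Ioi (0:ℝ)) :=
        Ioo_mem_nhdsGT_of_mem ⟨le_refl 0, ht⟩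
      obtain ⟨s, hs1, hs2⟩ := (h2.and (eventually_of_mem h3 fun x hx => hx)).exists
      have h4 := u_lower hsol 0 hs2.1 hs2.2.le
      nlinarith [Real.exp_pos ((ξ 0 - 2 * d) * (t - s))]
    | succ n ih =>
      intro z hz t ht
      obtain ⟨i, _, hi⟩ : ∃ i ∈ Finset.univ, (z i).natAbs ≠ 0 :=
        Finset.exists_ne_zero_of_sum_ne_zero (by rw [show (∑ j, (z j).natAbs) = normZ z from rfl, hz]; omega)
      set σ : ℤ := if 0 < z i then 1 else -1 with hσ_def
      set w : Fin d → ℤ := z - fun j => if j = i then σ else 0 with hw_def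
      have hwi : (w i).natAbs + 1 = (z i).natAbs := by
        have : w i = z i - σ := by simp [hw_def]
        rw [this, hσ_def]
        by_cases h : 0 < z i <;> simp [h] <;> omega
      have hwj : ∀ j, j ≠ i → w j = z j := by
        intro j hj; simp [hw_def, hj]
      have hwnorm : normZ w = n := by
        have hzsum : normZ z = (z i).natAbs + ∑ j ∈ Finset.univ.erase i, (z j).natAbs :=
          (Finset.add_sum_erase _ _ (Finset.mem_univ i)).symm
        have hwsum : normZ w = (w i).natAbs + ∑ j ∈ Finset.univ.erase i, (w j).natAbs :=
          (Finset.add_sum_erase _ _ (Finset.mem_univ i)).symm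
        have heq : ∑ j ∈ Finset.univ.erase i, (w j).natAbs
            = ∑ j ∈ Finset.univ.erase i, (z j).natAbs :=
          Finset.sum_congr rfl fun j hj => by rw [hwj j (Finset.ne_of_mem_erase hj)]
        omega
      have hwpos : ∀ s : ℝ, 0 < s → 0 < u s w := fun s hs => ih w hwnorm s hs
      -- u s w is one of the lap terms at z
      have hnbr : ∀ s : ℝ, 0 < s → u s w ≤ lap (u s) z + 2 * d * u s z := by
        intro s hs
        have hterm := term_le_lap_add (fun v => hsol.nonneg s hs v) z i
        by_cases h : 0 < z i
        · have : w = z - fun j => if j = i then 1 else 0 := by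
            funext j; by_cases hj : j = i <;> simp [hw_def, hσ_def, h, hj]
          rw [this]; exact hterm.2
        · have : w = z + fun j => if j = i then 1 else 0 := by
            funext j; by_cases hj : j = i <;> simp [hw_def, hσ_def, h, hj] <;> ring
          rw [this]; exact hterm.1
      -- strict positivity via strictly increasing exp-weighted function
      have hderiv : ∀ s ∈ Set.Icc (t/2) t, HasDerivAt (fun r => Real.exp (2 * d * r) * u r z)
          (Real.exp (2 * d * s) * ((lap (u s) z + ξ z * u s z) + 2 * d * u s z)) s := by
        intro s hs
        have hs0 : 0 < s := lt_of_lt_of_le (by linarith) hs.1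
        exact hasDerivAt_exp_mul (2 * d) (hsol.pde z s hs0)
      have hposd : ∀ s ∈ Set.Ioo (t/2) t,
          0 < Real.exp (2 * d * s) * ((lap (u s) z + ξ z * u s z) + 2 * d * u s z) := by
        intro s hs
        have hs0 : 0 < s := lt_trans (by linarith) hs.1
        have h1 := hnbr s hs0
        have h2 := hwpos s hs0
        have h3 : 0 ≤ ξ z * u s z :=
          mul_nonneg (le_trans zero_le_one (hξ1 z)) (hsol.nonneg s hs0 z)
        have h4 := Real.exp_pos (2 * d * s)
        nlinarith
      have hbase : 0 ≤ Real.exp (2 * d * (t/2)) * u (t/2) z :=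
        mul_nonneg (Real.exp_pos _).le (hsol.nonneg _ (by linarith) z)
      have hfinal := pos_of_deriv_pos (by linarith : t/2 < t) hderiv hposd hbase
      nlinarith [Real.exp_pos (2 * d * t)]
  intro z t ht
  exact key (normZ z) z rfl t ht

lemma pair_le_U (hsol : IsPAMSolution ξ u) {t : ℝ} (ht : 0 < t) {a b : Fin d → ℤ} (hne : a ≠ b) :
    u t a + u t b ≤ totalMass u t := by
  have h := Summable.sum_le_tsum ({a, b} : Finset (Fin d → ℤ)) (fun z _ => hsol.nonneg t ht z)
    (hsol.summable t ht)
  rwa [Finset.sum_pair hne] at h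

lemma U_contAt (hsol : IsPAMSolution ξ u) (hξ1 : ∀ z, 1 ≤ ξ z) {t : ℝ} (ht : 0 < t) :
    ContinuousAt (totalMass u) t := by
  set a := t/2 with ha_def
  set b := t+1 with hb_def
  have ha : 0 < a := by positivity
  have hab : a ≤ b := by rw [ha_def, hb_def]; linarith
  have hb : 0 < b := lt_of_lt_of_le ha hab
  have hmono : ∀ z, MonotoneOn (fun s => Real.exp (2 * d * s) * u s z) (Set.Icc a b) := by
    intro z
    apply monotoneOn_of_deriv_nonneg (convex_Icc a b)
    · intro s hs
      exact (hasDerivAt_exp_mul _ (hsol.pde z s (lt_of_lt_of_le ha hs.1))).continuousAt.continuousWithinAt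
    · intro s hs
      rw [interior_Icc] at hs
      exact (hasDerivAt_exp_mul (2*d)
        (hsol.pde z s (lt_of_lt_of_le ha hs.1.le))).differentiableAt.differentiableWithinAt
    · intro s hs
      rw [interior_Icc] at hs
      have hs0 : 0 < s := lt_of_lt_of_le ha hs.1.le
      rw [(hasDerivAt_exp_mul (2*d) (hsol.pde z s hs0)).deriv]
      have h1 : 0 ≤ lap (u s) z + 2 * d * u s z :=
        lap_add_nonneg (fun w => hsol.nonneg s hs0 w) z
      have h2 : 0 ≤ ξ z * u s z :=
        mul_nonneg (le_trans zero_le_one (hξ1 z)) (hsol.nonneg s hs0 z)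
      have h3 := (Real.exp_pos (2 * d * s)).le
      nlinarith
  have hbound : ∀ (z : Fin d → ℤ) (s : ℝ), s ∈ Set.Icc a b →
      ‖u s z‖ ≤ Real.exp (2 * d * (b - a)) * u b z := by
    intro z s hs
    have hs0 : 0 < s := lt_of_lt_of_le ha hs.1
    rw [Real.norm_of_nonneg (hsol.nonneg s hs0 z)]
    have h1 := hmono z hs (Set.right_mem_Icc.2 hab) hs.2
    have e1 : (0:ℝ) < Real.exp (2 * d * s) := Real.exp_pos _
    have hub : 0 ≤ u b z := hsol.nonneg b hb z
    have e2 : Real.exp (2 * d * b) ≤ Real.exp (2 * d * s) * Real.exp (2 * d * (b - a)) := by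
      rw [← Real.exp_add]
      apply Real.exp_le_exp.2
      have hd0 : (0:ℝ) ≤ 2 * d := by positivity
      nlinarith [hs.1]
    rw [← mul_le_mul_iff_right₀ e1]
    calc Real.exp (2 * d * s) * u s z ≤ Real.exp (2 * d * b) * u b z := h1
      _ ≤ (Real.exp (2 * d * s) * Real.exp (2 * d * (b - a))) * u b z :=
          mul_le_mul_of_nonneg_right e2 hub
      _ = Real.exp (2 * d * s) * (Real.exp (2 * d * (b - a)) * u b z) := by ring
  have hsum : Summable (fun z => Real.exp (2 * d * (b - a)) * u b z) :=
    (hsol.summable b hb).mul_left _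
  have hcont : ContinuousOn (fun s => ∑' z, u s z) (Set.Icc a b) :=
    continuousOn_tsum
      (fun z s hs => ((hsol.pde z s (lt_of_lt_of_le ha hs.1)).continuousAt).continuousWithinAt)
      hsum (fun z s hs => hbound z s hs)
  have hmem : Set.Icc a b ∈ nhds t := Icc_mem_nhds (by rw [ha_def]; linarith) (by rw [hb_def]; linarith)
  exact (hcont.continuousAt hmem)

/-- The deterministic core: if the potential is at least `1` everywhere and unbounded, no
one-point localization is possible. -/
theorem det_no_loc (hd : 1 ≤ d) (hξ1 : ∀ z, 1 ≤ ξ z) (hunb : ∀ c : ℝ, ∃ y, c < ξ y)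
    (hsol : IsPAMSolution ξ u) :
    ¬ ∃ Z : ℝ → Fin d → ℤ, Tendsto (fun t => u t (Z t) / totalMass u t) atTop (nhds 1) := by
  rintro ⟨Z, hZ⟩
  have hdR : (0:ℝ) < d := by exact_mod_cast Nat.lt_of_lt_of_le Nat.zero_lt_one hd
  have hpos := u_pos hsol hξ1
  have hU : ∀ t : ℝ, 0 < t → 0 < totalMass u t := by
    intro t ht
    have h1 : u t 0 ≤ totalMass u t :=
      Summable.le_tsum (hsol.summable t ht) 0 (fun z _ => hsol.nonneg t ht z)
    exact lt_of_lt_of_le (hpos 0 t ht) h1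
  have huniq : ∀ t : ℝ, 0 < t → ∀ a b : Fin d → ℤ,
      1/2 < u t a / totalMass u t → 1/2 < u t b / totalMass u t → a = b := by
    intro t ht a b hA hB
    by_contra hne
    have hUt := hU t ht
    rw [lt_div_iff₀ hUt] at hA hB
    have h := pair_le_U hsol ht hne
    linarith
  obtain ⟨T₀, hT₀⟩ := Filter.eventually_atTop.1
    (hZ.eventually (lt_mem_nhds (by norm_num : (1:ℝ)/2 < 1)))
  set T := max T₀ 1 with hT_def
  have hT1 : (1:ℝ) ≤ T := le_max_right _ _
  have hTpos : (0:ℝ) < T := lt_of_lt_of_le one_pos hT1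
  have hTr : ∀ t, T ≤ t → 1/2 < u t (Z t) / totalMass u t :=
    fun t ht => hT₀ t (le_trans (le_max_left _ _) ht)
  set W : ℝ → (Fin d → ℤ) := fun s => Z (max s T) with hW_def
  have hWr : ∀ s : ℝ, 1/2 < u (max s T) (W s) / totalMass u (max s T) :=
    fun s => hTr _ (le_max_right _ _)
  have hmaxpos : ∀ s : ℝ, 0 < max s T := fun s => lt_of_lt_of_le hTpos (le_max_right _ _)
  have hRcont : ∀ (a : Fin d → ℤ) (s : ℝ), 0 < s →
      ContinuousAt (fun r => u r a / totalMass u r) s := by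
    intro a s hs
    exact ((hsol.pde a s hs).continuousAt).div (U_contAt hsol hξ1 hs) (ne_of_gt (hU s hs))
  have hloc : IsLocallyConstant W := by
    rw [IsLocallyConstant.iff_eventually_eq]
    intro x
    have hcm : ContinuousAt (fun s : ℝ => max s T) x :=
      (continuous_id.max continuous_const).continuousAt
    have h1' := ContinuousAt.comp (f := fun s : ℝ => max s T)
      (g := fun r => u r (W x) / totalMass u r) (hRcont (W x) (max x T) (hmaxpos x)) hcm
    have h1 : ContinuousAt (fun s : ℝ => u (max s T) (W x) / totalMass u (max s T)) x := h1'
    have h2 : ∀ᶠ s in nhds x, 1/2 < u (max s T) (W x) / totalMass u (max s T) :=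
      h1.eventually (lt_mem_nhds (hWr x))
    filter_upwards [h2] with s hs
    exact huniq (max s T) (hmaxpos s) (W s) (W x) (hWr s) hs
  have hconst := hloc.eq_const 0
  set z₀ := W 0 with hz0_def
  have hZt : ∀ t : ℝ, T ≤ t → Z t = z₀ := by
    intro t ht
    have h1 : W t = z₀ := by rw [hconst]; rfl
    rw [hW_def] at h1
    simpa [max_eq_left ht] using h1
  have hz₀ : Tendsto (fun t => u t z₀ / totalMass u t) atTop (nhds 1) := by
    apply Filter.Tendsto.congr' _ hZ
    filter_upwards [eventually_ge_atTop T] with t ht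
    rw [hZt t ht]
  set θ : ℝ := (4*d)/(4*d+1) with hθ_def
  have hθ1 : θ < 1 := by rw [hθ_def, div_lt_one (by positivity)]; linarith
  obtain ⟨T₁, hT₁⟩ := Filter.eventually_atTop.1 (hz₀.eventually (lt_mem_nhds hθ1))
  set T₂ := max T₁ T with hT₂_def
  have hT₂T : T ≤ T₂ := le_max_right _ _
  have hT₂pos : 0 < T₂ := lt_of_lt_of_le hTpos hT₂T
  have hθr : ∀ t, T₂ ≤ t → θ < u t z₀ / totalMass u t :=
    fun t ht => hT₁ t (le_trans (le_max_left _ _) ht)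
  have hsmall : ∀ s, T₂ ≤ s → ∀ w, w ≠ z₀ → u s w ≤ u s z₀ / (4*d) := by
    intro s hs w hw
    have hs0 : 0 < s := lt_of_lt_of_le hT₂pos hs
    have hUs := hU s hs0
    have h1 := pair_le_U hsol hs0 hw
    have h2 := hθr s hs
    rw [lt_div_iff₀ hUs] at h2
    rw [le_div_iff₀ (by positivity : (0:ℝ) < 4*d)]
    have hθ_eq : θ * (4*d+1) = 4*d := by rw [hθ_def]; field_simp
    have h3 := mul_lt_mul_of_pos_right h2 (show (0:ℝ) < 4*d+1 by positivity)
    have h4 := hsol.nonneg s hs0 w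
    nlinarith
  have hlap : ∀ s, T₂ ≤ s → lap (u s) z₀ + ξ z₀ * u s z₀ ≤ (ξ z₀ + 1) * u s z₀ := by
    intro s hs
    have hs0 : 0 < s := lt_of_lt_of_le hT₂pos hs
    have hu0 := hsol.nonneg s hs0 z₀
    have key : lap (u s) z₀ + 2 * d * u s z₀ ≤ u s z₀ / 2 := by
      rw [lap_add]
      have hbd : ∀ i : Fin d, u s (z₀ + fun j => if j = i then 1 else 0)
          + u s (z₀ - fun j => if j = i then 1 else 0) ≤ 2 * (u s z₀ / (4*d)) := by
        intro i
        have hne1 : (z₀ + fun j => if j = i then 1 else 0) ≠ z₀ := by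
          intro h
          have := congrFun h i
          simp at this
        have hne2 : (z₀ - fun j => if j = i then 1 else 0) ≠ z₀ := by
          intro h
          have := congrFun h i
          simp at this
        have hb1 := hsmall s hs _ hne1
        have hb2 := hsmall s hs _ hne2
        linarith
      calc (∑ i : Fin d, (u s (z₀ + fun j => if j = i then 1 else 0)
              + u s (z₀ - fun j => if j = i then 1 else 0)))
          ≤ ∑ _i : Fin d, 2 * (u s z₀ / (4*d)) := Finset.sum_le_sum fun i _ => hbd i
        _ = d * (2 * (u s z₀ / (4*d))) := by
            rw [Finset.sum_const, Finset.card_univ, Fintype.card_fin, nsmul_eq_mul]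
        _ = u s z₀ / 2 := by field_simp; ring
    have h2d : (0:ℝ) ≤ 2 * d * u s z₀ := by positivity
    linarith
  obtain ⟨y, hy⟩ := hunb (ξ z₀ + 2*d + 2)
  have hyne : y ≠ z₀ := by
    intro h; rw [h] at hy; linarith
  have hupper : ∀ t, T₂ ≤ t → u t z₀ ≤ Real.exp ((ξ z₀ + 1) * (t - T₂)) * u T₂ z₀ :=
    fun t ht => gronwall_upper ht (u_deriv_mem hsol z₀ hT₂pos) (fun s hs => hlap s hs.1)
  have hlower : ∀ t, T₂ ≤ t → Real.exp ((ξ y - 2*d) * (t - T₂)) * u T₂ y ≤ u t y :=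
    fun t ht => u_lower hsol y hT₂pos ht
  have hlt : ∀ t, T ≤ t → u t y < u t z₀ := by
    intro t ht
    have ht0 : 0 < t := lt_of_lt_of_le hTpos ht
    have h1 := hTr t ht
    rw [hZt t ht] at h1
    rw [lt_div_iff₀ (hU t ht0)] at h1
    have h2 := pair_le_U hsol ht0 hyne
    linarith
  set c := ξ y - ξ z₀ - 2*d - 1 with hc_def
  have hc : (1:ℝ) ≤ c := by rw [hc_def]; linarith
  have hyT₂ := hpos y T₂ hT₂pos
  have hgrow : Tendsto (fun t : ℝ => Real.exp (c * (t - T₂))) atTop atTop := by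
    apply Real.tendsto_exp_atTop.comp
    have h1 : Tendsto (fun t : ℝ => t - T₂) atTop atTop := by
      simpa [sub_eq_add_neg] using tendsto_atTop_add_const_right atTop (-T₂) tendsto_id
    exact h1.const_mul_atTop (by linarith : (0:ℝ) < c)
  obtain ⟨t, ht₂, htK⟩ : ∃ t, T₂ ≤ t ∧ u T₂ z₀ / u T₂ y < Real.exp (c * (t - T₂)) := by
    obtain ⟨t, h2, h3⟩ :=
      ((hgrow.eventually_gt_atTop (u T₂ z₀ / u T₂ y)).and (eventually_ge_atTop T₂)).exists
    exact ⟨t, h3, h2⟩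
  have hA := hupper t ht₂
  have hB := hlower t ht₂
  have hC := hlt t (le_trans hT₂T ht₂)
  have hsplit : Real.exp ((ξ y - 2*d) * (t - T₂))
      = Real.exp (c * (t - T₂)) * Real.exp ((ξ z₀ + 1) * (t - T₂)) := by
    rw [← Real.exp_add]; congr 1; rw [hc_def]; ring
  have hE : (0:ℝ) < Real.exp ((ξ z₀ + 1) * (t - T₂)) := Real.exp_pos _
  rw [div_lt_iff₀ hyT₂] at htK
  have hfin : Real.exp ((ξ z₀ + 1) * (t - T₂)) * u T₂ z₀
      < Real.exp ((ξ y - 2*d) * (t - T₂)) * u T₂ y := by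
    rw [hsplit]
    nlinarith
  linarith

end Det

theorem no_one_point_almost_sure_localization
    {d : ℕ} (hd : 1 ≤ d) {α : ℝ} (hα : (d : ℝ) < α)
    {Ω : Type*} [MeasurableSpace Ω] (P : Measure Ω) [IsProbabilityMeasure P]
    (ξ : (Fin d → ℤ) → Ω → ℝ)
    (hmeas : ∀ z, Measurable (ξ z))
    (hindep : iIndepFun ξ P)
    (hpareto : ∀ z, IsPareto P α (ξ z))
    (u : Ω → ℝ → (Fin d → ℤ) → ℝ)
    (hu : ∀ᵐ ω ∂P, IsPAMSolution (fun z => ξ z ω) (u ω)) :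
    ∀ᵐ ω ∂P, ¬ ∃ Z : ℝ → Fin d → ℤ,
      Tendsto (fun t => u ω t (Z t) / totalMass (u ω) t) atTop (nhds 1) := by
  classical
  -- a.s. the potential is at least 1 everywhere
  have h1 : ∀ᵐ ω ∂P, ∀ z : Fin d → ℤ, 1 ≤ ξ z ω := by
    rw [ae_all_iff]
    intro z
    have hnull : P {ω | ξ z ω < 1} = 0 := by
      have hsub : {ω | ξ z ω < 1} ⊆ ⋃ n : ℕ, {ω | ξ z ω ≤ 1 - 1/(n+1)} := by
        intro ω hω
        have hω' : ξ z ω < 1 := hω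
        obtain ⟨n, hn⟩ := exists_nat_one_div_lt (by linarith : (0:ℝ) < 1 - ξ z ω)
        exact Set.mem_iUnion.2 ⟨n, by simp only [Set.mem_setOf_eq]; linarith⟩
      refine measure_mono_null hsub (measure_iUnion_null fun n => (hpareto z).2 _ ?_)
      have hp : (0:ℝ) < 1/(n+1) := by positivity
      linarith
    rw [ae_iff]
    have hset : {ω | ¬ 1 ≤ ξ z ω} = {ω | ξ z ω < 1} := by
      ext ω; simp [not_le]
    rw [hset]; exact hnull
  -- a.s. the potential is unbounded
  have h2 : ∀ᵐ ω ∂P, ∀ M : ℕ, ∃ y, (M:ℝ) < ξ y ω := by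
    rw [ae_all_iff]
    intro M
    rw [ae_iff]
    have hset : {ω | ¬ ∃ y, (M:ℝ) < ξ y ω} = {ω | ∀ y, ξ y ω ≤ (M:ℝ)} := by
      ext ω; simp [not_lt]
    rw [hset]
    rcases Nat.eq_zero_or_pos M with hM | hM
    · subst hM
      refine measure_mono_null (fun ω hω => ?_) ((hpareto 0).2 0 one_pos)
      have := hω 0
      simpa using this
    · set q : ENNReal := ENNReal.ofReal (1 - (M:ℝ) ^ (-α)) with hq_def
      have hM1 : (1:ℝ) ≤ (M:ℝ) := by exact_mod_cast hM
      have hq1 : q < 1 := by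
        rw [hq_def, ENNReal.ofReal_lt_one]
        have : (0:ℝ) < (M:ℝ) ^ (-α) := Real.rpow_pos_of_pos (by linarith) _
        linarith
      have key : ∀ n : ℕ, P {ω | ∀ y, ξ y ω ≤ (M:ℝ)} ≤ q ^ n := by
        intro n
        set g : ℕ → (Fin d → ℤ) := fun k _ => (k:ℤ) with hg_def
        have hginj : Function.Injective g := by
          intro a b hab
          have h := congrFun hab ⟨0, hd⟩
          simp only [hg_def] at h
          exact_mod_cast h
        set S : Finset (Fin d → ℤ) := (Finset.range n).image g with hS_def
        have hcard : S.card = n := by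
          rw [hS_def, Finset.card_image_of_injective _ hginj, Finset.card_range]
        have hprod := hindep.measure_inter_preimage_eq_mul S
          (sets := fun _ => Set.Iic (M:ℝ)) (fun i _ => measurableSet_Iic)
        have heach : ∀ z : Fin d → ℤ, P (ξ z ⁻¹' Set.Iic (M:ℝ)) = q := by
          intro z
          have hpre : ξ z ⁻¹' Set.Iic (M:ℝ) = {ω | ξ z ω ≤ (M:ℝ)} := rfl
          rw [hpre, (hpareto z).1 (M:ℝ) hM1, hq_def]
        calc P {ω | ∀ y, ξ y ω ≤ (M:ℝ)}
            ≤ P (⋂ z ∈ S, ξ z ⁻¹' Set.Iic (M:ℝ)) := by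
              apply measure_mono
              intro ω hω
              simp only [Set.mem_iInter]
              intro z _
              exact hω z
          _ = ∏ z ∈ S, P (ξ z ⁻¹' Set.Iic (M:ℝ)) := hprod
          _ = q ^ n := by
              rw [Finset.prod_congr rfl (fun z _ => heach z), Finset.prod_const, hcard]
      have hlim := ENNReal.tendsto_pow_atTop_nhds_zero_of_lt_one hq1
      have hle0 : P {ω | ∀ y, ξ y ω ≤ (M:ℝ)} ≤ 0 := ge_of_tendsto' hlim key
      exact le_zero_iff.1 hle0
  filter_upwards [hu, h1, h2] with ω hsolω hξω hMω
  apply det_no_loc hd hξω _ hsolω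
  intro c
  obtain ⟨M, hM⟩ := exists_nat_ge c
  obtain ⟨y, hy⟩ := hMω M
  exact ⟨y, lt_of_le_of_lt hM hy⟩

end PAM
end

section
/- Existence of the maximizers (Lemma 3.1): With probability one, for every t > 0 the set {z ∈ ℤ^d : Φ_t(z) > 0} is finite; consequently, the first, second, and third largest values of Φ_t over ℤ^d are attained, so the maximizers Z_t^{(1)}, Z_t^{(2)}, Z_t^{(3)} are well defined for every t > 0. -/
open MeasureTheory Filter Topology ProbabilityTheory

namespace PAM

/-! ### Auxiliary lemmas for `maximizers_well_defined` -/

lemma aux_norm1_nonneg {d : ℕ} (z : Fin d → ℤ) : 0 ≤ norm1 z := Nat.cast_nonneg _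

lemma aux_summable_int {s : ℝ} (hs : 1 < s) :
    Summable (fun k : ℤ => ((1:ℝ) + |(k:ℝ)|) ^ (-s)) := by
  have hnat : Summable (fun n : ℕ => ((n:ℝ) + 1) ^ (-s)) := by
    have h := (Real.summable_nat_rpow (p := -s)).2 (by linarith)
    have h2 := h.comp_injective Nat.succ_injective
    have : (fun n : ℕ => ((n:ℝ)+1) ^ (-s)) = ((fun n : ℕ => (n:ℝ) ^ (-s)) ∘ Nat.succ) := by
      funext n; simp [Function.comp, Nat.succ_eq_add_one]
    rw [this]; exact h2
  refine Summable.of_nat_of_neg ?_ ?_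
  · simpa [add_comm] using hnat
  · simpa [add_comm] using hnat

lemma aux_summable_pi (d : ℕ) (g : ℤ → ℝ) (hg0 : ∀ k, 0 ≤ g k) (hg : Summable g) :
    Summable (fun z : Fin d → ℤ => ∏ i, g (z i)) := by
  induction d with
  | zero => exact summable_of_finite_support (Set.toFinite _)
  | succ n ih =>
      have h1 : (0:ℤ→ℝ) ≤ g := hg0
      have h2 : (0:(Fin n → ℤ)→ℝ) ≤ fun z => ∏ i, g (z i) :=
        fun z => Finset.prod_nonneg fun i _ => hg0 _
      have hprod := Summable.mul_of_nonneg (f := g)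
        (g := fun z : Fin n → ℤ => ∏ i, g (z i)) hg ih h1 h2
      have := ((Fin.consEquiv fun _ : Fin (n + 1) => ℤ).symm.summable_iff
        (f := fun p : ℤ × (Fin n → ℤ) => g p.1 * ∏ i, g (p.2 i))).2 hprod
      refine this.congr fun z => ?_
      simp [Fin.consEquiv, Fin.prod_univ_succ, Fin.tail]

lemma aux_summable_core {d : ℕ} (hd : 1 ≤ d) {s : ℝ} (hs : (d:ℝ) < s) :
    Summable (fun z : Fin d → ℤ => ((1:ℝ) + norm1 z) ^ (-s)) := by
  have hd0 : (0:ℝ) < d := by exact_mod_cast hd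
  have hsd : 1 < s / d := (one_lt_div hd0).2 hs
  have hg : Summable (fun k : ℤ => ((1:ℝ) + |(k:ℝ)|) ^ (-(s/d))) := aux_summable_int hsd
  have hg0 : ∀ k : ℤ, 0 ≤ ((1:ℝ) + |(k:ℝ)|) ^ (-(s/d)) := fun k => Real.rpow_nonneg
    (by positivity) _
  refine Summable.of_nonneg_of_le
    (fun z => Real.rpow_nonneg (by linarith [aux_norm1_nonneg z]) _)
    (fun z => ?_) (aux_summable_pi d _ hg0 hg)
  have hposi : ∀ i : Fin d, (0:ℝ) < 1 + |((z i : ℤ):ℝ)| := fun i => by positivity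
  have hprod_pos : (0:ℝ) < ∏ i, ((1:ℝ) + |((z i : ℤ):ℝ)|) :=
    Finset.prod_pos fun i _ => hposi i
  have hN : (0:ℝ) < 1 + norm1 z := by have := aux_norm1_nonneg z; linarith
  have hle : ∏ i, ((1:ℝ) + |((z i : ℤ):ℝ)|) ≤ (1 + norm1 z) ^ d := by
    calc ∏ i, ((1:ℝ) + |((z i : ℤ):ℝ)|) ≤ ∏ _i : Fin d, ((1:ℝ) + norm1 z) := ?_
      _ = (1 + norm1 z) ^ d := by simp
    refine Finset.prod_le_prod (fun i _ => (hposi i).le) (fun i _ => ?_)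
    have hsum : (z i).natAbs ≤ ∑ j, (z j).natAbs :=
      Finset.single_le_sum (f := fun j => (z j).natAbs) (fun j _ => Nat.zero_le _)
        (Finset.mem_univ i)
    have : |((z i : ℤ):ℝ)| ≤ norm1 z := by
      calc |((z i : ℤ):ℝ)| = (((z i).natAbs : ℕ) : ℝ) := by
            rw [Nat.cast_natAbs, Int.cast_abs]
        _ ≤ (((∑ j, (z j).natAbs : ℕ)) : ℝ) := by exact_mod_cast hsum
        _ = norm1 z := rfl
    linarith
  have key : ((1 + norm1 z) ^ d : ℝ) ^ (-(s/d)) ≤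
      (∏ i, ((1:ℝ) + |((z i : ℤ):ℝ)|)) ^ (-(s/d)) :=
    Real.rpow_le_rpow_of_nonpos hprod_pos hle (neg_nonpos.mpr (by positivity))
  calc ((1:ℝ) + norm1 z) ^ (-s)
      = (((1:ℝ) + norm1 z) ^ (d:ℕ)) ^ (-(s/d)) := by
        rw [← Real.rpow_natCast _ d, ← Real.rpow_mul hN.le]
        congr 1
        field_simp
    _ ≤ (∏ i, ((1:ℝ) + |((z i : ℤ):ℝ)|)) ^ (-(s/d)) := key
    _ = ∏ i, ((1:ℝ) + |((z i : ℤ):ℝ)|) ^ (-(s/d)) := by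
        rw [← Real.finset_prod_rpow _ _ (fun i _ => (hposi i).le)]

lemma aux_summable_max {d : ℕ} (hd : 1 ≤ d) {α : ℝ} (hα : (d:ℝ) < α) :
    Summable (fun z : Fin d → ℤ => (max 1 (norm1 z)) ^ (-α)) := by
  have hd0 : (0:ℝ) < d := by exact_mod_cast hd
  have hα0 : 0 < α := lt_trans hd0 hα
  refine Summable.of_nonneg_of_le
    (fun z => Real.rpow_nonneg (le_trans zero_le_one (le_max_left _ _)) _)
    (fun z => ?_) (((aux_summable_core hd hα).mul_left ((2:ℝ) ^ α)))
  have h1 : (0:ℝ) < max 1 (norm1 z) := lt_of_lt_of_le one_pos (le_max_left _ _)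
  have h2 : (1:ℝ) + norm1 z ≤ 2 * max 1 (norm1 z) := by
    have := le_max_left (1:ℝ) (norm1 z)
    have := le_max_right (1:ℝ) (norm1 z)
    linarith
  have key : ((2:ℝ) * max 1 (norm1 z)) ^ (-α) ≤ ((1:ℝ) + norm1 z) ^ (-α) :=
    Real.rpow_le_rpow_of_nonpos (by linarith [aux_norm1_nonneg z]) h2
      (neg_nonpos.mpr hα0.le)
  have hmul : ((2:ℝ) * max 1 (norm1 z)) ^ (-α) = 2 ^ (-α) * (max 1 (norm1 z)) ^ (-α) :=
    Real.mul_rpow (by norm_num) h1.le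
  calc (max 1 (norm1 z)) ^ (-α)
      = 2 ^ α * (2 ^ (-α) * (max 1 (norm1 z)) ^ (-α)) := by
        rw [← mul_assoc, ← Real.rpow_add two_pos]
        norm_num
    _ = 2 ^ α * ((2:ℝ) * max 1 (norm1 z)) ^ (-α) := by rw [hmul]
    _ ≤ 2 ^ α * ((1:ℝ) + norm1 z) ^ (-α) := by
        have h2pos : (0:ℝ) < (2:ℝ) ^ α := Real.rpow_pos_of_pos two_pos _
        exact mul_le_mul_of_nonneg_left key h2pos.le

lemma pareto_tail {Ω : Type*} [MeasurableSpace Ω] (P : Measure Ω) [IsProbabilityMeasure P]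
    {α : ℝ} (hα : 0 < α) {X : Ω → ℝ} (hm : Measurable X) (hp : IsPareto P α X)
    {x : ℝ} (hx : 1 ≤ x) : P {ω | x < X ω} = ENNReal.ofReal (x ^ (-α)) := by
  have hms : MeasurableSet {ω | X ω ≤ x} := hm measurableSet_Iic
  have hcompl : {ω | x < X ω} = {ω | X ω ≤ x}ᶜ := by
    ext ω; simp [not_le]
  have hle1 : x ^ (-α) ≤ 1 := Real.rpow_le_one_of_one_le_of_nonpos hx (by linarith)
  have hnn : 0 ≤ x ^ (-α) := Real.rpow_nonneg (by linarith) _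
  rw [hcompl, measure_compl hms (measure_ne_top _ _), hp.1 x hx, measure_univ]
  rw [show (1:ENNReal) = ENNReal.ofReal 1 from (ENNReal.ofReal_one).symm,
    ← ENNReal.ofReal_sub _ (by linarith)]
  norm_num

lemma pareto_ae_one_le {Ω : Type*} [MeasurableSpace Ω] (P : Measure Ω)
    {α : ℝ} {X : Ω → ℝ} (hp : IsPareto P α X) : ∀ᵐ ω ∂P, 1 ≤ X ω := by
  have hnull : P {ω | X ω < 1} = 0 := by
    have hsub : {ω | X ω < 1} ⊆ ⋃ n : ℕ, {ω | X ω ≤ 1 - ((n:ℝ)+1)⁻¹} := by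
      intro ω hω
      simp only [Set.mem_setOf_eq] at hω
      obtain ⟨n, hn⟩ := exists_nat_one_div_lt (by linarith : (0:ℝ) < 1 - X ω)
      refine Set.mem_iUnion.2 ⟨n, ?_⟩
      simp only [Set.mem_setOf_eq]
      rw [one_div] at hn
      linarith
    refine measure_mono_null hsub (measure_iUnion_null fun n => hp.2 _ ?_)
    have : (0:ℝ) < ((n:ℝ)+1)⁻¹ := by positivity
    linarith
  filter_upwards [measure_eq_zero_iff_ae_notMem.1 hnull] with ω hω
  simpa [not_lt] using hω

lemma measure_event_le {d : ℕ} {Ω : Type*} [MeasurableSpace Ω] (P : Measure Ω)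
    [IsProbabilityMeasure P] {α : ℝ} (hα : 0 < α)
    {X : Ω → ℝ} (hm : Measurable X) (hp : IsPareto P α X) (n : ℕ) (z : Fin d → ℤ) :
    P {ω | norm1 z ≤ ((n:ℝ)+1) * X ω}
      ≤ ENNReal.ofReal ((2*((n:ℝ)+1)) ^ α * (max 1 (norm1 z)) ^ (-α)) := by
  set c : ℝ := 2*((n:ℝ)+1) with hc
  have hcpos : (0:ℝ) < c := by positivity
  have hc1 : (1:ℝ) ≤ c := by
    have : (0:ℝ) ≤ (n:ℝ) := Nat.cast_nonneg n
    simp only [hc]; linarith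
  rcases le_or_gt (norm1 z) c with hcase | hcase
  · have hmaxle : max 1 (norm1 z) ≤ c := max_le hc1 hcase
    have hmaxpos : (0:ℝ) < max 1 (norm1 z) := lt_of_lt_of_le one_pos (le_max_left _ _)
    have h1 : c ^ (-α) ≤ (max 1 (norm1 z)) ^ (-α) :=
      Real.rpow_le_rpow_of_nonpos hmaxpos hmaxle (neg_nonpos.mpr hα.le)
    have h2 : (1:ℝ) ≤ c ^ α * (max 1 (norm1 z)) ^ (-α) := by
      have hccancel : c ^ α * c ^ (-α) = 1 := by
        rw [← Real.rpow_add hcpos]; norm_num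
      calc (1:ℝ) = c ^ α * c ^ (-α) := hccancel.symm
        _ ≤ c ^ α * (max 1 (norm1 z)) ^ (-α) :=
            mul_le_mul_of_nonneg_left h1 (Real.rpow_nonneg hcpos.le _)
    calc P {ω | norm1 z ≤ ((n:ℝ)+1) * X ω} ≤ 1 := prob_le_one
      _ = ENNReal.ofReal 1 := ENNReal.ofReal_one.symm
      _ ≤ ENNReal.ofReal (c ^ α * (max 1 (norm1 z)) ^ (-α)) := ENNReal.ofReal_le_ofReal h2
  · set x : ℝ := norm1 z / c with hx
    have hx1 : 1 < x := (one_lt_div hcpos).2 hcase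
    have hxpos : 0 < x := lt_trans one_pos hx1
    have hsub : {ω | norm1 z ≤ ((n:ℝ)+1) * X ω} ⊆ {ω | x < X ω} := by
      intro ω hω
      simp only [Set.mem_setOf_eq] at hω ⊢
      have hn1 : (0:ℝ) < (n:ℝ)+1 := by positivity
      have hXge : norm1 z / ((n:ℝ)+1) ≤ X ω := (div_le_iff₀ hn1).2 (by linarith [hω])
      have h2x : norm1 z / ((n:ℝ)+1) = 2 * x := by
        rw [hx, hc]; field_simp
      linarith
    have hmaxeq : max 1 (norm1 z) = norm1 z := max_eq_right (le_trans hc1 hcase.le)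
    have hxval : x ^ (-α) = c ^ α * (norm1 z) ^ (-α) := by
      rw [hx, Real.div_rpow (aux_norm1_nonneg z) hcpos.le, Real.rpow_neg hcpos.le]
      field_simp
    calc P {ω | norm1 z ≤ ((n:ℝ)+1) * X ω} ≤ P {ω | x < X ω} := measure_mono hsub
      _ = ENNReal.ofReal (x ^ (-α)) := pareto_tail P hα hm hp hx1.le
      _ = ENNReal.ofReal (c ^ α * (max 1 (norm1 z)) ^ (-α)) := by rw [hxval, hmaxeq]

open Classical in
lemma exists_top3 {ι : Type*} [Infinite ι] (f : ι → ℝ) (h : {z | f z ≠ 0}.Finite) :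
    ∃ z1 z2 z3 : ι, z1 ≠ z2 ∧ z1 ≠ z3 ∧ z2 ≠ z3 ∧
      (∀ z, f z ≤ f z1) ∧ (∀ z, z ≠ z1 → f z ≤ f z2) ∧
      (∀ z, z ≠ z1 → z ≠ z2 → f z ≤ f z3) := by
  classical
  set F : Finset ι := h.toFinset with hF
  have hzero : ∀ z : ι, z ∉ F → f z = 0 := by
    intro z hz
    by_contra hc
    exact hz (h.mem_toFinset.2 hc)
  have hcompl : ((F : Set ι)ᶜ).Infinite := F.finite_toSet.infinite_compl
  obtain ⟨t, hts, htc⟩ := hcompl.exists_subset_card_eq 3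
  obtain ⟨w1, w2, w3, h12, h13, h23, rfl⟩ := Finset.card_eq_three.1 htc
  have hw1 : w1 ∉ F := by simpa using hts (by simp)
  have hw2 : w2 ∉ F := by simpa using hts (by simp)
  have hw3 : w3 ∉ F := by simpa using hts (by simp)
  set C : Finset ι := F ∪ {w1, w2, w3} with hC
  have hw1C : w1 ∈ C := by simp [hC]
  have hw2C : w2 ∈ C := by simp [hC]
  have hw3C : w3 ∈ C := by simp [hC]
  obtain ⟨z1, hz1C, hz1⟩ := C.exists_max_image f ⟨w1, hw1C⟩
  have hne1 : (C.erase z1).Nonempty := by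
    rcases eq_or_ne w1 z1 with rfl | hne
    · exact ⟨w2, Finset.mem_erase.2 ⟨h12.symm, hw2C⟩⟩
    · exact ⟨w1, Finset.mem_erase.2 ⟨hne, hw1C⟩⟩
  obtain ⟨z2, hz2C, hz2⟩ := (C.erase z1).exists_max_image f hne1
  have hz2ne : z2 ≠ z1 := (Finset.mem_erase.1 hz2C).1
  have hex : ∃ w, (w = w1 ∨ w = w2 ∨ w = w3) ∧ w ≠ z1 ∧ w ≠ z2 := by
      by_contra hcon
      push_neg at hcon
      have e1 := hcon w1 (Or.inl rfl)
      have e2 := hcon w2 (Or.inr (Or.inl rfl))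
      have e3 := hcon w3 (Or.inr (Or.inr rfl))
      rcases Classical.em (w1 = z1) with a1 | a1
      · rcases Classical.em (w2 = z1) with a2 | a2
        · exact h12 (a1.trans a2.symm)
        · have b2 := e2 a2
          rcases Classical.em (w3 = z1) with a3 | a3
          · exact h13 (a1.trans a3.symm)
          · exact h23 ((e2 a2).trans (e3 a3).symm)
      · have b1 := e1 a1
        rcases Classical.em (w2 = z1) with a2 | a2
        · rcases Classical.em (w3 = z1) with a3 | a3
          · exact h23 (a2.trans a3.symm)
          · exact h13 ((e1 a1).trans (e3 a3).symm)
        · exact h12 ((e1 a1).trans (e2 a2).symm)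
  have hne2 : ((C.erase z1).erase z2).Nonempty := by
    obtain ⟨w, hw, hwz1, hwz2⟩ := hex
    have hwC : w ∈ C := by rcases hw with rfl | rfl | rfl <;> assumption
    exact ⟨w, Finset.mem_erase.2 ⟨hwz2, Finset.mem_erase.2 ⟨hwz1, hwC⟩⟩⟩
  obtain ⟨z3, hz3C, hz3⟩ := ((C.erase z1).erase z2).exists_max_image f hne2
  have hz3ne2 : z3 ≠ z2 := (Finset.mem_erase.1 hz3C).1
  have hz3ne1 : z3 ≠ z1 := (Finset.mem_erase.1 (Finset.mem_erase.1 hz3C).2).1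
  have hfz1 : 0 ≤ f z1 := by
    rw [← hzero w1 hw1]; exact hz1 w1 hw1C
  have hfz2 : 0 ≤ f z2 := by
    rcases eq_or_ne w1 z1 with rfl | hne
    · rw [← hzero w2 hw2]; exact hz2 w2 (Finset.mem_erase.2 ⟨h12.symm, hw2C⟩)
    · rw [← hzero w1 hw1]; exact hz2 w1 (Finset.mem_erase.2 ⟨hne, hw1C⟩)
  have hfz3 : 0 ≤ f z3 := by
    obtain ⟨w, hw, hwz1, hwz2⟩ := hex
    have hwC : w ∈ C := by rcases hw with rfl | rfl | rfl <;> assumption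
    have hwF : w ∉ F := by rcases hw with rfl | rfl | rfl <;> assumption
    rw [← hzero w hwF]
    exact hz3 w (Finset.mem_erase.2 ⟨hwz2, Finset.mem_erase.2 ⟨hwz1, hwC⟩⟩)
  refine ⟨z1, z2, z3, hz2ne.symm, hz3ne1.symm, hz3ne2.symm, ?_, ?_, ?_⟩
  · intro z
    by_cases hzC : z ∈ C
    · exact hz1 z hzC
    · rw [hzero z (fun hmem => hzC (Finset.mem_union_left _ hmem))]; exact hfz1
  · intro z hz
    by_cases hzC : z ∈ C
    · exact hz2 z (Finset.mem_erase.2 ⟨hz, hzC⟩)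
    · rw [hzero z (fun hmem => hzC (Finset.mem_union_left _ hmem))]; exact hfz2
  · intro z hza hzb
    by_cases hzC : z ∈ C
    · exact hz3 z (Finset.mem_erase.2 ⟨hzb, Finset.mem_erase.2 ⟨hza, hzC⟩⟩)
    · rw [hzero z (fun hmem => hzC (Finset.mem_union_left _ hmem))]; exact hfz3

theorem maximizers_well_defined
    {d : ℕ} (hd : 1 ≤ d) {α : ℝ} (hα : (d : ℝ) < α)
    {Ω : Type*} [MeasurableSpace Ω] (P : Measure Ω) [IsProbabilityMeasure P]
    (ξ : (Fin d → ℤ) → Ω → ℝ)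
    (hmeas : ∀ z, Measurable (ξ z))
    (hindep : iIndepFun ξ P)
    (hpareto : ∀ z, IsPareto P α (ξ z)) :
    ∀ᵐ ω ∂P, ∀ t : ℝ, 0 < t →
      {z : Fin d → ℤ | 0 < Phi (fun x => ξ x ω) t z}.Finite ∧
      ∃ z1 z2 z3 : Fin d → ℤ, z1 ≠ z2 ∧ z1 ≠ z3 ∧ z2 ≠ z3 ∧
        (∀ z, Phi (fun x => ξ x ω) t z ≤ Phi (fun x => ξ x ω) t z1) ∧
        (∀ z, z ≠ z1 → Phi (fun x => ξ x ω) t z ≤ Phi (fun x => ξ x ω) t z2) ∧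
        (∀ z, z ≠ z1 → z ≠ z2 → Phi (fun x => ξ x ω) t z ≤ Phi (fun x => ξ x ω) t z3) := by
  have hd0 : (0:ℝ) < d := by exact_mod_cast hd
  have hα0 : (0:ℝ) < α := lt_trans hd0 hα
  haveI : Nonempty (Fin d) := ⟨⟨0, hd⟩⟩
  haveI : Infinite (Fin d → ℤ) := Pi.infinite_of_right
  -- a.s. all ξ z ≥ 1
  have h_one : ∀ᵐ ω ∂P, ∀ z : Fin d → ℤ, 1 ≤ ξ z ω :=
    ae_all_iff.2 fun z => pareto_ae_one_le P (hpareto z)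
  -- a.s. finiteness of the level sets for each integer horizon
  have h_fin : ∀ᵐ ω ∂P, ∀ n : ℕ,
      {z : Fin d → ℤ | norm1 z ≤ ((n:ℝ)+1) * ξ z ω}.Finite := by
    rw [ae_all_iff]
    intro n
    have hbound : ∀ z : Fin d → ℤ,
        P {ω | norm1 z ≤ ((n:ℝ)+1) * ξ z ω}
          ≤ ENNReal.ofReal ((2*((n:ℝ)+1)) ^ α * (max 1 (norm1 z)) ^ (-α)) :=
      fun z => measure_event_le P hα0 (hmeas z) (hpareto z) n z
    have hnn : ∀ z : Fin d → ℤ,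
        0 ≤ (2*((n:ℝ)+1)) ^ α * (max 1 (norm1 z)) ^ (-α) := fun z =>
      mul_nonneg (Real.rpow_nonneg (by positivity) _)
        (Real.rpow_nonneg (le_trans zero_le_one (le_max_left _ _)) _)
    have hsummable : Summable
        (fun z : Fin d → ℤ => (2*((n:ℝ)+1)) ^ α * (max 1 (norm1 z)) ^ (-α)) :=
      (aux_summable_max hd hα).mul_left _
    have htsum : ∑' z : Fin d → ℤ, P {ω | norm1 z ≤ ((n:ℝ)+1) * ξ z ω} ≠ ⊤ := by
      refine ne_top_of_le_ne_top ?_ (ENNReal.tsum_le_tsum hbound)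
      rw [← ENNReal.ofReal_tsum_of_nonneg hnn hsummable]
      exact ENNReal.ofReal_ne_top
    have := ae_finite_setOf_mem (μ := P)
      (s := fun z : Fin d → ℤ => {ω | norm1 z ≤ ((n:ℝ)+1) * ξ z ω}) htsum
    filter_upwards [this] with ω hω
    exact hω
  filter_upwards [h_one, h_fin] with ω h1 h2
  intro t ht
  set f : (Fin d → ℤ) → ℝ := Phi (fun x => ξ x ω) t with hf
  set n : ℕ := ⌈t⌉₊ with hn
  have htn : t ≤ (n:ℝ) + 1 := le_trans (Nat.le_ceil t) (by linarith)
  have hsubset : {z : Fin d → ℤ | f z ≠ 0} ⊆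
      {z : Fin d → ℤ | norm1 z ≤ ((n:ℝ)+1) * ξ z ω} := by
    intro z hz
    simp only [Set.mem_setOf_eq] at hz ⊢
    by_cases hcond : norm1 z ≤ t * ξ z ω
    · have hξ : (0:ℝ) ≤ ξ z ω := le_trans zero_le_one (h1 z)
      calc norm1 z ≤ t * ξ z ω := hcond
        _ ≤ ((n:ℝ)+1) * ξ z ω := mul_le_mul_of_nonneg_right htn hξ
    · exfalso
      apply hz
      simp only [hf, Phi, if_neg hcond]
  have hfinne : {z : Fin d → ℤ | f z ≠ 0}.Finite := (h2 n).subset hsubset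
  refine ⟨?_, ?_⟩
  · exact hfinne.subset fun z hz => ne_of_gt hz
  · exact exists_top3 f hfinne

end PAM
end

section
/- Lower bound for the top values of Φ_t (Lemma 3.2(i)): For every ε > 0 and for each i ∈ {1,2,3}, with probability one, eventually for all t: Φ_t(Z_t^{(i)}) > a_t·(log t)^{−ε} and ξ(Z_t^{(i)}) > a_t·(log t)^{−ε}. -/
open MeasureTheory Filter Topology ProbabilityTheory

namespace PAM

lemma eta_nonneg {d : ℕ} (z : Fin d → ℤ) : 0 ≤ eta z := by
  unfold eta etaN
  exact Real.log_natCast_nonneg _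

lemma npath_le {d n : ℕ} (z : Fin d → ℤ) : Npath d n z ≤ (3 ^ d) ^ n := by
  classical
  unfold Npath
  rcases (pathsThrough d n z).finite_or_infinite with hf | hf
  · have key : (pathsThrough d n z).ncard ≤ (Set.univ : Set (Fin n → Fin d → Fin 3)).ncard := by
      apply Set.ncard_le_ncard_of_injOn
        (fun y i k => (⟨((y i.succ - y i.castSucc) k + 1).toNat % 3, Nat.mod_lt _ (by norm_num)⟩ : Fin 3))
      · intro a _; trivial
      · intro y1 h1 y2 h2 hef
        have hstep : ∀ y ∈ pathsThrough d n z, ∀ i : Fin n, ∀ k : Fin d,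
            ((y i.succ - y i.castSucc : Fin d → ℤ) k).natAbs ≤ 1 := by
          intro y hy i k
          have h := hy.2.1 i
          unfold normZ at h
          calc ((y i.succ - y i.castSucc : Fin d → ℤ) k).natAbs
              ≤ ∑ m, ((y i.succ - y i.castSucc : Fin d → ℤ) m).natAbs :=
                Finset.single_le_sum (f := fun m => ((y i.succ - y i.castSucc : Fin d → ℤ) m).natAbs)
                  (fun _ _ => Nat.zero_le _) (Finset.mem_univ k)
            _ = 1 := h
        have hsteps : ∀ i : Fin n, ∀ k : Fin d, (y1 i.succ - y1 i.castSucc : Fin d → ℤ) k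
            = (y2 i.succ - y2 i.castSucc : Fin d → ℤ) k := by
          intro i k
          have e := congrFun (congrFun hef i) k
          simp only [Fin.mk.injEq] at e
          have b1 := hstep y1 h1 i k
          have b2 := hstep y2 h2 i k
          omega
        funext i
        induction i using Fin.induction with
        | zero => rw [h1.1, h2.1]
        | succ i ih =>
          funext k
          have hs := hsteps i k
          simp only [Pi.sub_apply] at hs
          have ihk := congrFun ih k
          omega
    calc (pathsThrough d n z).ncard ≤ _ := key
      _ = (3 ^ d) ^ n := by
        simp [Set.ncard_univ, Nat.card_eq_fintype_card, Fintype.card_fun, pow_mul]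
  · rw [hf.ncard]; exact Nat.zero_le _

lemma eta_le {d : ℕ} (z : Fin d → ℤ) : eta z ≤ norm1 z * ((d : ℝ) * Real.log 3) := by
  have hlog3 : (0:ℝ) ≤ Real.log 3 := Real.log_nonneg (by norm_num)
  have hrhs : 0 ≤ norm1 z * ((d : ℝ) * Real.log 3) := by
    unfold norm1; positivity
  unfold eta etaN
  rcases Nat.eq_zero_or_pos (Npath d (normZ z) z) with h | h
  · simp [h]; exact hrhs
  · have hle : (Npath d (normZ z) z : ℝ) ≤ (((3:ℕ) ^ d) ^ (normZ z) : ℕ) := by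
      exact_mod_cast npath_le z
    calc Real.log (Npath d (normZ z) z)
        ≤ Real.log ((((3:ℕ) ^ d) ^ (normZ z) : ℕ) : ℝ) :=
          Real.log_le_log (by exact_mod_cast h) hle
      _ = norm1 z * ((d : ℝ) * Real.log 3) := by
          push_cast
          rw [← pow_mul, Real.log_pow]
          unfold norm1; push_cast; ring

lemma lt_xi_of_lt_Phi {d : ℕ} {ξ : (Fin d → ℤ) → ℝ} {t b : ℝ} (ht : 0 < t) {z : Fin d → ℤ}
    (hξ : 1 ≤ ξ z) (hM : 3 ^ d * (1 + (d : ℝ) * Real.log 3) ≤ b) (h : b < Phi ξ t z) :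
    b < ξ z := by
  set Cd := (d : ℝ) * Real.log 3 with hCd
  have hlog3 : (0:ℝ) ≤ Real.log 3 := Real.log_nonneg (by norm_num)
  have hCd0 : 0 ≤ Cd := by positivity
  have hb0 : 0 < b := lt_of_lt_of_le (by positivity) hM
  unfold Phi at h
  by_cases hbr : norm1 z ≤ t * ξ z
  swap
  · rw [if_neg hbr] at h; linarith
  rw [if_pos hbr] at h
  have hn0 : 0 ≤ norm1 z := by unfold norm1; positivity
  have hlog0 : 0 ≤ Real.log (ξ z) := Real.log_nonneg hξ
  have heta := eta_le z
  by_cases hcase : (3:ℝ) ^ d ≤ ξ z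
  · have hlog : Cd ≤ Real.log (ξ z) := by
      rw [hCd, ← Real.log_pow]
      exact Real.log_le_log (by positivity) hcase
    have h2 : norm1 z / t * Cd ≤ norm1 z / t * Real.log (ξ z) :=
      mul_le_mul_of_nonneg_left hlog (by positivity)
    have h3 : eta z / t ≤ norm1 z / t * Cd := by
      rw [div_mul_eq_mul_div]
      gcongr
    linarith
  · push_neg at hcase
    exfalso
    have h1 : norm1 z / t ≤ ξ z := (div_le_iff₀ ht).mpr (by linarith)
    have h3 : eta z / t ≤ (norm1 z / t) * Cd := by
      rw [div_mul_eq_mul_div]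
      gcongr
    have h4 : 0 ≤ norm1 z / t * Real.log (ξ z) := by positivity
    nlinarith

lemma sub_log_mono {c y1 y2 : ℝ} (hc : 0 ≤ c) (h1 : c ≤ y1) (hy1 : 1 ≤ y1) (h12 : y1 ≤ y2) :
    y1 - c * Real.log y1 ≤ y2 - c * Real.log y2 := by
  rcases eq_or_lt_of_le hc with rfl | hc0
  · simp; linarith
  · have hy1p : (0:ℝ) < y1 := by linarith
    have hlog : Real.log y2 - Real.log y1 ≤ (y2 - y1) / y1 := by
      rw [← Real.log_div (by linarith) (by linarith)]
      calc Real.log (y2 / y1) ≤ y2 / y1 - 1 :=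
            Real.log_le_sub_one_of_pos (div_pos (by linarith) hy1p)
        _ = (y2 - y1) / y1 := by field_simp
    have h5 : c * (Real.log y2 - Real.log y1) ≤ c * ((y2 - y1) / y1) :=
      mul_le_mul_of_nonneg_left hlog hc
    have h6 : c * ((y2 - y1) / y1) ≤ y2 - y1 := by
      rw [mul_div_assoc', div_le_iff₀ hy1p]
      nlinarith
    linarith

lemma tendsto_linlog (a b c : ℝ) (ha : 0 < a) :
    Tendsto (fun y : ℝ => a * y - b * Real.log y + c) atTop atTop := by
  have hmono : ∀ᶠ y in atTop, (a / 2) * y + c ≤ a * y - b * Real.log y + c := by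
    have h := Real.isLittleO_log_id_atTop.def (c := a / (2 * (|b| + 1))) (by positivity)
    filter_upwards [h, eventually_ge_atTop (1:ℝ)] with y hy hy1
    simp only [Real.norm_eq_abs, id_eq] at hy
    have hylog : 0 ≤ Real.log y := Real.log_nonneg hy1
    rw [abs_of_nonneg hylog, abs_of_nonneg (by linarith : (0:ℝ) ≤ y)] at hy
    have hb : b * Real.log y ≤ |b| * Real.log y := mul_le_mul_of_nonneg_right (le_abs_self b) hylog
    have h2 : |b| * Real.log y ≤ |b| * (a / (2 * (|b| + 1)) * y) :=
      mul_le_mul_of_nonneg_left hy (abs_nonneg b)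
    have h3 : |b| * (a / (2 * (|b| + 1)) * y) ≤ (a / 2) * y := by
      rw [← mul_assoc]
      apply mul_le_mul_of_nonneg_right _ (by linarith : (0:ℝ) ≤ y)
      rw [mul_div_assoc', div_le_div_iff₀ (by positivity) (by norm_num)]
      nlinarith [abs_nonneg b]
    nlinarith
  apply tendsto_atTop_mono' atTop hmono
  exact tendsto_atTop_add_const_right atTop c (tendsto_id.const_mul_atTop (by positivity))


/-- box at scale j, copy c -/
noncomputable def box {d : ℕ} (i0 : Fin d) (j : ℕ) (c : Fin 3) : Finset (Fin d → ℤ) :=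
  Fintype.piFinset fun i => if i = i0 then
    Finset.Ico ((4 + (c : ℕ)) * 2 ^ j : ℤ) ((5 + (c : ℕ)) * 2 ^ j) else Finset.Ico 0 (2 ^ j)

lemma box_card {d : ℕ} (i0 : Fin d) (j : ℕ) (c : Fin 3) : (box i0 j c).card = 2 ^ (j * d) := by
  rw [box, Fintype.card_piFinset]
  have key : ∀ i : Fin d, (if i = i0 then
      Finset.Ico ((4 + (c : ℕ)) * 2 ^ j : ℤ) ((5 + (c : ℕ)) * 2 ^ j) else
      Finset.Ico (0:ℤ) (2 ^ j)).card = 2 ^ j := by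
    intro i
    split
    · rw [Int.card_Ico]
      have : ((5 + (c:ℕ)) * 2 ^ j : ℤ) - (4 + (c:ℕ)) * 2 ^ j = ((2 ^ j : ℕ) : ℤ) := by
        push_cast; ring
      rw [this, Int.toNat_natCast]
    · rw [Int.card_Ico]
      have : ((2:ℤ) ^ j) - 0 = ((2 ^ j : ℕ) : ℤ) := by push_cast; ring
      rw [this, Int.toNat_natCast]
  rw [Finset.prod_congr rfl (fun i _ => key i)]
  simp [Finset.prod_const, Finset.card_univ, pow_mul]

lemma box_norm_le {d : ℕ} (i0 : Fin d) (j : ℕ) (c : Fin 3) (z : Fin d → ℤ)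
    (hz : z ∈ box i0 j c) : normZ z ≤ (d + 7) * 2 ^ j := by
  rw [box, Fintype.mem_piFinset] at hz
  have hc3 : (c : ℕ) < 3 := c.isLt
  have hpow : (2:ℤ) ^ j = ((2 ^ j : ℕ) : ℤ) := by push_cast; ring
  have hbd : ∀ i : Fin d, (z i).natAbs ≤ 2 ^ j + (if i = i0 then 6 * 2 ^ j else 0) := by
    intro i
    have h := hz i
    by_cases hi : i = i0
    · rw [if_pos hi, Finset.mem_Ico] at h
      rw [if_pos hi]
      have hup : z i < 7 * (2:ℤ) ^ j := by
        refine lt_of_lt_of_le h.2 ?_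
        apply mul_le_mul_of_nonneg_right _ (by positivity : (0:ℤ) ≤ 2 ^ j)
        have : ((5 + (c:ℕ)) : ℤ) ≤ 7 := by push_cast; omega
        exact this
      have hlo : (0:ℤ) ≤ z i := le_trans (by positivity) h.1
      rw [hpow] at hup
      omega
    · rw [if_neg hi, Finset.mem_Ico] at h
      rw [if_neg hi]
      have hup := h.2
      have hlo := h.1
      rw [hpow] at hup
      omega
  calc normZ z ≤ ∑ i : Fin d, (2 ^ j + (if i = i0 then 6 * 2 ^ j else 0)) :=
        Finset.sum_le_sum fun i _ => hbd i
    _ = d * 2 ^ j + 6 * 2 ^ j := by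
        rw [Finset.sum_add_distrib, Finset.sum_ite_eq' Finset.univ i0]
        simp [Finset.sum_const, Finset.card_univ]
    _ ≤ (d + 7) * 2 ^ j := by ring_nf; omega

lemma box_inj {d : ℕ} (i0 : Fin d) (j : ℕ) {c c' : Fin 3} {z : Fin d → ℤ}
    (h : z ∈ box i0 j c) (h' : z ∈ box i0 j c') : c = c' := by
  rw [box, Fintype.mem_piFinset] at h h'
  have h1 := h i0
  have h2 := h' i0
  rw [if_pos rfl] at h1 h2
  rw [Finset.mem_Ico] at h1 h2
  have hp : (0:ℤ) < 2 ^ j := by positivity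
  have hcc : (c : ℕ) = (c' : ℕ) := by
    by_contra hne
    rcases Nat.lt_or_ge (c : ℕ) (c' : ℕ) with hlt | hge
    · have hh : ((5 + (c:ℕ)) : ℤ) * 2 ^ j ≤ ((4 + (c':ℕ)) : ℤ) * 2 ^ j := by
        apply mul_le_mul_of_nonneg_right _ hp.le
        push_cast; omega
      linarith [h1.1, h1.2, h2.1, h2.2]
    · have hlt' : (c' : ℕ) < (c : ℕ) := by omega
      have hh : ((5 + (c':ℕ)) : ℤ) * 2 ^ j ≤ ((4 + (c:ℕ)) : ℤ) * 2 ^ j := by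
        apply mul_le_mul_of_nonneg_right _ hp.le
        push_cast; omega
      linarith [h1.1, h1.2, h2.1, h2.2]
  exact Fin.ext hcc

/-- threshold -/
noncomputable def xthr (α : ℝ) (d j : ℕ) : ℝ := ((2:ℝ) ^ (j * d) / (2 * Real.log j)) ^ (α⁻¹)

lemma one_lt_log_j {j : ℕ} (hj : 3 ≤ j) : 1 ≤ Real.log j := by
  have h3 : Real.exp 1 < 3 := lt_trans Real.exp_one_lt_d9 (by norm_num)
  have h1 : (1:ℝ) < Real.log 3 := (Real.lt_log_iff_exp_lt (by norm_num)).2 h3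
  have h2 : Real.log 3 ≤ Real.log j :=
    Real.log_le_log (by norm_num) (by exact_mod_cast hj)
  linarith

lemma two_mul_le_two_pow {m : ℕ} (hm : 2 ≤ m) : 2 * m ≤ 2 ^ m := by
  induction m with
  | zero => omega
  | succ n ih =>
    rcases Nat.lt_or_ge n 2 with h | h
    · interval_cases n <;> simp_all <;> omega
    · have := ih (by omega)
      have h2 : 2 ≤ 2 ^ n := by
        calc 2 ≤ 2 * n := by omega
          _ ≤ 2 ^ n := this
      rw [pow_succ]
      omega

lemma xthr_base_one_le {d : ℕ} (hd : 1 ≤ d) {j : ℕ} (hj : 3 ≤ j) :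
    1 ≤ (2:ℝ) ^ (j * d) / (2 * Real.log j) := by
  have hlog := one_lt_log_j hj
  have hnum : 2 * Real.log j ≤ (2:ℝ) ^ (j * d) := by
    have h1 : Real.log j ≤ (j:ℝ) - 1 := Real.log_le_sub_one_of_pos (by positivity)
    have h2 : (2 * j : ℕ) ≤ 2 ^ j := two_mul_le_two_pow (by omega)
    have h3 : ((2:ℝ)) ^ j ≤ 2 ^ (j * d) := by
      apply pow_le_pow_right₀ (by norm_num)
      exact Nat.le_mul_of_pos_right j (by omega)
    have h2' : (2 * (j:ℝ)) ≤ 2 ^ j := by exact_mod_cast h2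
    linarith
  rw [le_div_iff₀ (by positivity)]
  linarith

lemma xthr_one_le {α : ℝ} (hα : 0 < α) {d : ℕ} (hd : 1 ≤ d) {j : ℕ} (hj : 3 ≤ j) :
    1 ≤ xthr α d j := by
  unfold xthr
  rw [show (1:ℝ) = ((2:ℝ) ^ (j * d) / (2 * Real.log j)) ^ (0:ℝ) from
    (Real.rpow_zero _).symm]
  exact Real.rpow_le_rpow_of_exponent_le (xthr_base_one_le hd hj) (by positivity)

lemma xthr_rpow_neg {α : ℝ} (hα : 0 < α) {d : ℕ} (hd : 1 ≤ d) {j : ℕ} (hj : 3 ≤ j) :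
    (xthr α d j) ^ (-α) = (2 * Real.log j) / 2 ^ (j * d) := by
  have hlog := one_lt_log_j hj
  have hB : (0:ℝ) < 2 ^ (j * d) / (2 * Real.log j) := by positivity
  unfold xthr
  rw [← Real.rpow_mul hB.le]
  have : α⁻¹ * (-α) = -1 := by field_simp
  rw [this, Real.rpow_neg_one, inv_div]

theorem box_hit {d : ℕ} (i0 : Fin d) {α : ℝ} (hα : (d:ℝ) < α) (hd : 1 ≤ d)
    {Ω : Type*} [MeasurableSpace Ω] (P : Measure Ω) [IsProbabilityMeasure P]
    (ξ : (Fin d → ℤ) → Ω → ℝ)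
    (hindep : iIndepFun ξ P)
    (hpareto : ∀ z, IsPareto P α (ξ z)) :
    ∀ᵐ ω ∂P, ∀ᶠ j : ℕ in atTop, ∀ c : Fin 3,
      ∃ z ∈ box i0 j c, xthr α d j < ξ z ω := by
  have hα0 : (0:ℝ) < α := by
    have : (1:ℝ) ≤ d := by exact_mod_cast hd
    linarith
  set S : ℕ → Set Ω := fun n =>
    ⋃ c : Fin 3, ⋂ z ∈ box i0 (n+3) c, {ω | ξ z ω ≤ xthr α d (n+3)} with hS
  have hbox : ∀ (n : ℕ) (c : Fin 3),
      P (⋂ z ∈ box i0 (n+3) c, {ω | ξ z ω ≤ xthr α d (n+3)})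
        ≤ ENNReal.ofReal (Real.exp (-(2 * Real.log ((n:ℝ)+3)))) := by
    intro n c
    set j := n + 3 with hj
    have hj3 : 3 ≤ j := by omega
    set x := xthr α d j with hx
    have hx1 : 1 ≤ x := xthr_one_le hα0 hd hj3
    have hy : x ^ (-α) = (2 * Real.log j) / 2 ^ (j * d) := xthr_rpow_neg hα0 hd hj3
    have hy0 : 0 ≤ x ^ (-α) := Real.rpow_nonneg (by linarith) _
    have hy1 : x ^ (-α) ≤ 1 :=
      Real.rpow_le_one_of_one_le_of_nonpos hx1 (by linarith)
    have hprod : P (⋂ z ∈ box i0 j c, {ω | ξ z ω ≤ x})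
        = ∏ z ∈ box i0 j c, P {ω | ξ z ω ≤ x} := by
      apply hindep.meas_biInter
      intro z _
      exact ⟨Set.Iic x, measurableSet_Iic, rfl⟩
    rw [hprod]
    have heach : ∀ z ∈ box i0 j c, P {ω | ξ z ω ≤ x} = ENNReal.ofReal (1 - x ^ (-α)) :=
      fun z _ => (hpareto z).1 x hx1
    rw [Finset.prod_congr rfl heach, Finset.prod_const, box_card]
    rw [← ENNReal.ofReal_pow (by linarith)]
    apply ENNReal.ofReal_le_ofReal
    have hstep1 : (1 - x ^ (-α)) ^ (2 ^ (j*d)) ≤ Real.exp (-(x ^ (-α))) ^ (2 ^ (j*d)) := by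
      apply pow_le_pow_left₀ (by linarith)
      linarith [Real.add_one_le_exp (-(x ^ (-α)))]
    have hstep2 : Real.exp (-(x ^ (-α))) ^ (2 ^ (j*d))
        = Real.exp ((2 ^ (j*d) : ℕ) * -(x ^ (-α))) := (Real.exp_nat_mul _ _).symm
    have hstep3 : ((2 ^ (j*d) : ℕ) : ℝ) * -(x ^ (-α)) = -(2 * Real.log j) := by
      rw [hy]
      push_cast
      rw [mul_neg, neg_inj, mul_div_assoc']
      rw [mul_comm]
      rw [mul_div_assoc]
      rw [div_self (by positivity : ((2:ℝ)) ^ (j*d) ≠ 0), mul_one]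
    calc (1 - x ^ (-α)) ^ 2 ^ (j * d) ≤ Real.exp (-(x ^ (-α))) ^ (2 ^ (j*d)) := hstep1
      _ = Real.exp (-(2 * Real.log j)) := by rw [hstep2, hstep3]
      _ = Real.exp (-(2 * Real.log ((n:ℝ)+3))) := by norm_num [hj]
  have hSbound : ∀ n : ℕ, P (S n) ≤ ENNReal.ofReal (3 * Real.exp (-(2 * Real.log ((n:ℝ)+3)))) := by
    intro n
    calc P (S n) ≤ ∑' c : Fin 3, P (⋂ z ∈ box i0 (n+3) c, {ω | ξ z ω ≤ xthr α d (n+3)}) :=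
          measure_iUnion_le _
      _ = ∑ c : Fin 3, P (⋂ z ∈ box i0 (n+3) c, {ω | ξ z ω ≤ xthr α d (n+3)}) := tsum_fintype _
      _ ≤ ∑ c : Fin 3, ENNReal.ofReal (Real.exp (-(2 * Real.log ((n:ℝ)+3)))) :=
          Finset.sum_le_sum (fun c _ => hbox n c)
      _ = 3 * ENNReal.ofReal (Real.exp (-(2 * Real.log ((n:ℝ)+3)))) := by
          simp [Finset.sum_const]
      _ = ENNReal.ofReal (3 * Real.exp (-(2 * Real.log ((n:ℝ)+3)))) := by
          rw [ENNReal.ofReal_mul (by norm_num)]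
          norm_num
  have hexp_eq : ∀ n : ℕ, Real.exp (-(2 * Real.log ((n:ℝ)+3))) = (((n:ℝ)+3)^2)⁻¹ := by
    intro n
    rw [Real.exp_neg]
    congr 1
    rw [show (2 : ℝ) * Real.log ((n:ℝ)+3) = ((2:ℕ) : ℝ) * Real.log ((n:ℝ)+3) by norm_num]
    rw [Real.exp_nat_mul, Real.exp_log (by positivity)]
  have hsummable : Summable (fun n : ℕ => 3 * Real.exp (-(2 * Real.log ((n:ℝ)+3)))) := by
    apply Summable.mul_left
    have base : Summable (fun n : ℕ => (((n:ℝ))^2)⁻¹) := by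
      simpa using Real.summable_one_div_nat_pow.2 (by norm_num : 1 < 2)
    have shifted : Summable (fun n : ℕ => ((((n+3:ℕ)):ℝ)^2)⁻¹) :=
      (summable_nat_add_iff 3).2 base
    apply Summable.congr shifted
    intro n
    rw [hexp_eq]
    push_cast
    ring_nf
  have hsum : (∑' n, P (S n)) ≠ ⊤ := by
    have h1 : (∑' n, P (S n)) ≤ ∑' n : ℕ, ENNReal.ofReal (3 * Real.exp (-(2 * Real.log ((n:ℝ)+3)))) :=
      ENNReal.tsum_le_tsum hSbound
    have h2 : (∑' n : ℕ, ENNReal.ofReal (3 * Real.exp (-(2 * Real.log ((n:ℝ)+3)))))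
        = ENNReal.ofReal (∑' n : ℕ, 3 * Real.exp (-(2 * Real.log ((n:ℝ)+3)))) :=
      (ENNReal.ofReal_tsum_of_nonneg (fun n => by positivity) hsummable).symm
    rw [h2] at h1
    exact ne_top_of_le_ne_top ENNReal.ofReal_ne_top h1
  have hae := ae_eventually_notMem hsum
  filter_upwards [hae] with ω hω
  rw [eventually_atTop] at hω ⊢
  obtain ⟨n₀, hn₀⟩ := hω
  refine ⟨n₀ + 3, fun j hjge c => ?_⟩
  have hnot := hn₀ (j - 3) (by omega)
  rw [hS] at hnot
  simp only [Set.mem_iUnion, Set.mem_iInter, Set.mem_setOf_eq, not_exists, not_forall] at hnot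
  have hj3 : j - 3 + 3 = j := by omega
  rw [hj3] at hnot
  obtain ⟨z, hz, hzx⟩ := hnot c
  exact ⟨z, hz, lt_of_not_ge hzx⟩

lemma eventually_log_le {c : ℝ} (hc : 0 < c) : ∀ᶠ y : ℝ in atTop, Real.log y ≤ c * y := by
  have h := Real.isLittleO_log_id_atTop.def hc
  filter_upwards [h, eventually_ge_atTop (1:ℝ)] with y hy hy1
  simp only [Real.norm_eq_abs, id_eq] at hy
  rwa [abs_of_nonneg (Real.log_nonneg hy1), abs_of_nonneg (by linarith)] at hy

/-- the scale function -/
noncomputable def jfun (d : ℕ) (α ε t : ℝ) : ℕ :=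
  ⌊((qex d α + 1) * (Real.log t - Real.log (Real.log t))
     - ε * α / (2 * d) * Real.log (Real.log t)) / Real.log 2⌋₊

set_option maxHeartbeats 2000000 in
lemma eventual_conditions {d : ℕ} (hd : 1 ≤ d) {α : ℝ} (hα : (d:ℝ) < α) {ε : ℝ}
    (hε : 0 < ε) (hε1 : ε ≤ 1) (j₀ : ℕ) :
    ∀ᶠ t : ℝ in atTop,
      3 ≤ t ∧
      j₀ ≤ jfun d α ε t ∧ 3 ≤ jfun d α ε t ∧
      ((d:ℝ) + 7) * 2 ^ (jfun d α ε t) ≤ t * xthr α d (jfun d α ε t) ∧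
      amt d α t * Real.log t ^ (-ε)
          + ((d:ℝ) + 7) * 2 ^ (jfun d α ε t) / t * Real.log (xthr α d (jfun d α ε t))
        < xthr α d (jfun d α ε t) ∧
      3 ^ d * (1 + (d:ℝ) * Real.log 3) ≤ amt d α t * Real.log t ^ (-ε) := by
  have hd1 : (1:ℝ) ≤ d := by exact_mod_cast hd
  have hαd : (0:ℝ) < α - d := by linarith
  have hα0 : (0:ℝ) < α := by linarith
  have hd0 : (0:ℝ) < d := by linarith
  have hlog2 : (0:ℝ) < Real.log 2 := Real.log_pos (by norm_num)
  set q := qex d α with hqdef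
  have hq : 0 < q := div_pos hd0 hαd
  have hq1 : (d/α) * (q + 1) = q := by
    rw [hqdef]; unfold qex; field_simp; try ring
  set G := ε * α / (2 * (d:ℝ)) with hGdef
  have hG : 0 < G := by positivity
  have hGd : ((d:ℝ)/α) * G = ε / 2 := by rw [hGdef]; field_simp
  have hGε : G - ε/2 = ε*(α-d)/(2*d) := by rw [hGdef]; field_simp
  set δ := min (ε/8) (ε*(α-(d:ℝ))/(8*d)) with hδdef
  have hδ : 0 < δ := lt_min (by positivity) (by positivity)
  have hδ1 : δ ≤ ε/8 := min_le_left _ _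
  have hδ2 : δ ≤ ε*(α-d)/(8*d) := min_le_right _ _
  have hc3 : 0 < ε*(α-(d:ℝ))/(2*d) - δ := by
    have h4 : ε*(α-(d:ℝ))/(2*d) = 4*(ε*(α-d)/(8*d)) := by field_simp; ring
    have ha8 : 0 < ε*(α-(d:ℝ))/(8*d) := by positivity
    linarith
  set c4 := (q+1)/(2*((q+1)+G)) with hc4def
  have hc4 : 0 < c4 := by positivity
  set K := (d:ℝ) + 7 with hKdef
  have hK : 0 < K := by positivity
  set M := (3:ℝ) ^ d * (1 + (d:ℝ) * Real.log 3) with hMdef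
  have hlogT : Tendsto (fun t : ℝ => Real.log t) atTop atTop := Real.tendsto_log_atTop
  have hmT : Tendsto (fun t : ℝ => Real.log (Real.log t)) atTop atTop := hlogT.comp hlogT
  have ev1 : ∀ᶠ t : ℝ in atTop, (3:ℝ) ≤ t := eventually_ge_atTop 3
  have ev2 : ∀ᶠ t : ℝ in atTop, 1 ≤ Real.log t := hlogT.eventually_ge_atTop 1
  have ev3 : ∀ᶠ t : ℝ in atTop, 1 ≤ Real.log (Real.log t) := hmT.eventually_ge_atTop 1
  have ev4 : ∀ᶠ t : ℝ in atTop, Real.log (Real.log t) ≤ c4 * Real.log t :=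
    hlogT.eventually (eventually_log_le hc4)
  have ev5 : ∀ᶠ t : ℝ in atTop,
      2 * ((max j₀ 3 : ℕ):ℝ) * Real.log 2 / (q+1) ≤ Real.log t := hlogT.eventually_ge_atTop _
  have ev6 : ∀ᶠ t : ℝ in atTop, (q+1)/Real.log 2 ≤ Real.log t := hlogT.eventually_ge_atTop _
  have ev7a : ∀ᶠ t : ℝ in atTop,
      Real.log (Real.log (Real.log t)) ≤ (α*δ/2) * Real.log (Real.log t) :=
    hmT.eventually (eventually_log_le (by positivity))
  have ev7b : ∀ᶠ t : ℝ in atTop, 4*Real.log 2/(α*δ) ≤ Real.log (Real.log t) :=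
    hmT.eventually_ge_atTop _
  have ev8 : ∀ᶠ t : ℝ in atTop,
      ((1 + (d:ℝ)/α)*Real.log 2 + 1)/(3*ε/8) ≤ Real.log (Real.log t) :=
    hmT.eventually_ge_atTop _
  have ev9 : ∀ᶠ t : ℝ in atTop,
      (Real.log K + ((d:ℝ)/α)*Real.log 2)/(3/8) ≤ Real.log (Real.log t) :=
    hmT.eventually_ge_atTop _
  have ev10 : ∀ᶠ t : ℝ in atTop,
      (Real.log K + Real.log q + ((d:ℝ)/α + 2)*Real.log 2)/(ε*(α-(d:ℝ))/(2*d) - δ)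
        ≤ Real.log (Real.log t) := hmT.eventually_ge_atTop _
  have ev11 : ∀ᶠ t : ℝ in atTop,
      Real.log (max M 1) ≤ q * Real.log t - (q+ε) * Real.log (Real.log t) := by
    have h := (tendsto_linlog q (q+ε) 0 hq).comp hlogT
    filter_upwards [h.eventually_ge_atTop (Real.log (max M 1))] with t ht
    simpa using ht
  filter_upwards [ev1, ev2, ev3, ev4, ev5, ev6, ev7a, ev7b, ev8, ev9, ev10, ev11] with t
    h1 h2 h3 h4 h5 h6 h7a h7b h8 h9 h10 h11
  set ℓ := Real.log t with hℓdef
  set m := Real.log ℓ with hmdef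
  have hℓ0 : 0 < ℓ := by linarith
  have hm0 : 0 < m := by linarith
  have ht0 : (0:ℝ) < t := by linarith
  set φ := (q+1)*(ℓ - m) - G * m with hφdef
  have hjn : jfun d α ε t = ⌊φ / Real.log 2⌋₊ := by
    rw [hφdef, hqdef, hGdef, hmdef, hℓdef]
    unfold jfun
    rfl
  have hamt : amt d α t = (t/ℓ)^q := by
    rw [hℓdef, hqdef]; rfl
  have hφℓ : (q+1)/2 * ℓ ≤ φ := by
    have hmul : ((q+1)+G) * m ≤ ((q+1)+G) * (c4 * ℓ) :=
      mul_le_mul_of_nonneg_left h4 (by positivity)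
    have hc4e : ((q+1)+G) * (c4 * ℓ) = (q+1)/2 * ℓ := by
      rw [hc4def]; field_simp
    rw [hφdef]
    linarith
  have hφpos : 0 < φ := lt_of_lt_of_le (by positivity) hφℓ
  have hφup : φ ≤ (q+1)*ℓ := by
    have hp1 : 0 ≤ (q+1)*m := by positivity
    have hp2 : 0 ≤ G*m := by positivity
    rw [hφdef]
    linarith
  clear_value ℓ m φ
  set jn := jfun d α ε t with hjndef
  clear hjndef
  have hjup : (jn:ℝ) ≤ φ / Real.log 2 := by
    rw [hjn]; exact Nat.floor_le (div_nonneg hφpos.le hlog2.le)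
  have hjlow : φ / Real.log 2 < (jn:ℝ) + 1 := by
    rw [hjn]; exact Nat.lt_floor_add_one _
  have hjmax : max j₀ 3 ≤ jn := by
    rw [hjn]
    apply Nat.le_floor
    rw [le_div_iff₀ hlog2]
    have : 2 * ((max j₀ 3 : ℕ):ℝ) * Real.log 2 ≤ (q+1) * ℓ := by
      rw [div_le_iff₀ (by positivity : (0:ℝ) < q+1)] at h5
      linarith
    linarith [hφℓ]
  clear_value jn
  clear hjn
  have hjge3 : 3 ≤ jn := le_trans (le_max_right _ _) hjmax
  have hj₀ : j₀ ≤ jn := le_trans (le_max_left _ _) hjmax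
  set A := (jn:ℝ) * Real.log 2 with hAdef
  have hA_up : A ≤ φ := by
    rw [hAdef, ← le_div_iff₀ hlog2]; exact hjup
  have hA_low : φ - Real.log 2 ≤ A := by
    rw [div_lt_iff₀ hlog2] at hjlow
    rw [hAdef]
    linarith [hjlow]
  have h2A : ((2:ℝ)) ^ (jn:ℕ) = Real.exp A := by
    rw [hAdef, Real.exp_nat_mul, Real.exp_log (by norm_num : (0:ℝ) < 2)]
  have hjℓ2 : (jn:ℝ) ≤ ℓ^2 := by
    have hstep : φ / Real.log 2 ≤ ℓ * ℓ := by
      rw [div_le_iff₀ hlog2]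
      have h6' : (q+1) ≤ ℓ * Real.log 2 := by
        rw [div_le_iff₀ hlog2] at h6; linarith
      have h6'' : (q+1)*ℓ ≤ ℓ * Real.log 2 * ℓ :=
        mul_le_mul_of_nonneg_right h6' hℓ0.le
      linarith [hφup]
    calc (jn:ℝ) ≤ φ / Real.log 2 := hjup
      _ ≤ ℓ * ℓ := hstep
      _ = ℓ^2 := by ring
  clear_value A
  have hjnpos : (0:ℝ) < (jn:ℝ) := by
    have : (3:ℝ) ≤ (jn:ℝ) := by exact_mod_cast hjge3
    linarith
  have hlogjn1 : 1 ≤ Real.log jn := one_lt_log_j hjge3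
  have hlogjn : Real.log (jn:ℝ) ≤ 2 * m := by
    calc Real.log (jn:ℝ) ≤ Real.log (ℓ^2) := Real.log_le_log hjnpos hjℓ2
      _ = 2 * m := by rw [Real.log_pow, hmdef]; push_cast; ring
  have hW : Real.log (2 * Real.log jn) ≤ α*δ*m := by
    have e1 : Real.log (2 * Real.log jn) = Real.log 2 + Real.log (Real.log jn) :=
      Real.log_mul (by norm_num) (by linarith)
    have e2 : Real.log (Real.log jn) ≤ Real.log (2*m) :=
      Real.log_le_log (by linarith) (by linarith)
    have e3 : Real.log (2*m) = Real.log 2 + Real.log m := Real.log_mul (by norm_num) (by linarith)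
    have e4 : Real.log m ≤ (α*δ/2) * m := h7a
    have e5 : 4*Real.log 2 ≤ α*δ*m := by
      rw [div_le_iff₀ (by positivity)] at h7b; linarith
    linarith
  have hWpos : 0 ≤ Real.log (2 * Real.log jn) :=
    Real.log_nonneg (by linarith)
  set x := xthr α d jn with hxdef
  have hx1 : 1 ≤ x := xthr_one_le hα0 hd hjge3
  have hxpos : 0 < x := by linarith
  have hlogx0 : 0 ≤ Real.log x := Real.log_nonneg hx1
  have hBpos : (0:ℝ) < 2 ^ (jn * d) / (2 * Real.log jn) := by positivity
  have hlogx_eq : Real.log x = ((d:ℝ)*A - Real.log (2*Real.log jn)) / α := by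
    rw [hxdef]
    unfold xthr
    rw [Real.log_rpow hBpos, Real.log_div (by positivity) (by positivity),
      Real.log_pow]
    rw [hAdef]
    push_cast
    field_simp
  clear_value x
  have hφids : ((d:ℝ)/α)*φ = q*(ℓ-m) - (ε/2)*m := by
    rw [hφdef]
    linear_combination (ℓ - m) * hq1 - m * hGd
  have hlogx_low : q*(ℓ-m) - (ε/2)*m - δ*m - ((d:ℝ)/α)*Real.log 2 ≤ Real.log x := by
    rw [hlogx_eq]
    have hnum : (d:ℝ)*(φ - Real.log 2) - α*δ*m ≤ (d:ℝ)*A - Real.log (2*Real.log jn) := by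
      have := mul_le_mul_of_nonneg_left hA_low hd0.le
      linarith
    have hdiv : ((d:ℝ)*(φ - Real.log 2) - α*δ*m)/α ≤ ((d:ℝ)*A - Real.log (2*Real.log jn))/α :=
      (div_le_div_iff_of_pos_right hα0).2 hnum
    have heq : ((d:ℝ)*(φ - Real.log 2) - α*δ*m)/α
        = ((d:ℝ)/α)*φ - ((d:ℝ)/α)*Real.log 2 - δ*m := by
      rw [mul_sub, sub_div, sub_div, mul_assoc,
        mul_div_cancel_left₀ _ (ne_of_gt hα0), mul_div_right_comm, mul_div_right_comm]
    rw [heq, hφids] at hdiv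
    linarith
  have hlogx_up : Real.log x ≤ ((d:ℝ)/α)*φ := by
    rw [hlogx_eq]
    have hnum : (d:ℝ)*A - Real.log (2*Real.log jn) ≤ (d:ℝ)*φ := by
      have := mul_le_mul_of_nonneg_left hA_up hd0.le
      linarith
    calc ((d:ℝ)*A - Real.log (2*Real.log jn))/α ≤ ((d:ℝ)*φ)/α :=
          (div_le_div_iff_of_pos_right hα0).2 hnum
      _ = ((d:ℝ)/α)*φ := by ring
  set b := amt d α t * ℓ ^ (-ε) with hbdef
  have htℓ : 0 < t/ℓ := div_pos ht0 hℓ0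
  have hbpos : 0 < b := by
    rw [hbdef, hamt]
    positivity
  have hlogb : Real.log b = q*(ℓ-m) - ε*m := by
    rw [hbdef, hamt, Real.log_mul (by positivity) (by positivity),
      Real.log_rpow htℓ, Real.log_rpow hℓ0,
      Real.log_div (by positivity) (by positivity)]
    rw [← hℓdef, ← hmdef]
    ring
  clear_value b
  have hMb : M ≤ b := by
    have h0 : 0 < max M 1 := lt_of_lt_of_le one_pos (le_max_right _ _)
    have : max M 1 ≤ b := by
      calc max M 1 = Real.exp (Real.log (max M 1)) := (Real.exp_log h0).symm
        _ ≤ Real.exp (Real.log b) := by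
            apply Real.exp_le_exp.2
            rw [hlogb]
            linarith [h11]
        _ = b := Real.exp_log hbpos
    exact le_trans (le_max_left _ _) this
  have h8' : (1 + (d:ℝ)/α)*Real.log 2 + 1 ≤ (3*ε/8) * m := by
    rw [div_le_iff₀ (by positivity)] at h8; linarith
  have hlb2 : Real.log b + Real.log 2 < Real.log x := by
    rw [hlogb]
    have h38 : (3*ε/8)*m ≤ (ε/2 - δ)*m := by
      apply mul_le_mul_of_nonneg_right _ hm0.le
      linarith
    linarith [hlogx_low, h8', h38]
  have hbhalf : b < x / 2 := by
    have : b * 2 < x := by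
      calc b * 2 = Real.exp (Real.log b + Real.log 2) := by
            rw [Real.exp_add, Real.exp_log hbpos, Real.exp_log (by norm_num : (0:ℝ) < 2)]
        _ < Real.exp (Real.log x) := Real.exp_lt_exp.2 hlb2
        _ = x := Real.exp_log hxpos
    linarith
  have h9' : Real.log K + ((d:ℝ)/α)*Real.log 2 ≤ (3/8) * m := by
    rw [div_le_iff₀ (by norm_num : (0:ℝ) < 3/8)] at h9; linarith
  have hP2 : K * 2 ^ (jn:ℕ) ≤ t * x := by
    have hexp : Real.log K + A ≤ ℓ + Real.log x := by
      have hcoef : (3:ℝ)/8 ≤ 1 + G - ε/2 - δ := by linarith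
      have h38 : (3/8)*m ≤ (1 + G - ε/2 - δ)*m :=
        mul_le_mul_of_nonneg_right hcoef hm0.le
      have hφe : φ - ℓ = q*ℓ - (q+1)*m - G*m := by rw [hφdef]; ring
      linarith [hlogx_low, hA_up, h38, h9', hφe]
    calc K * 2 ^ (jn:ℕ) = Real.exp (Real.log K + A) := by
          rw [Real.exp_add, Real.exp_log hK, h2A]
      _ ≤ Real.exp (ℓ + Real.log x) := Real.exp_le_exp.2 hexp
      _ = t * x := by rw [Real.exp_add, hℓdef, Real.exp_log ht0, Real.exp_log hxpos]
  have h10' : Real.log K + Real.log q + ((d:ℝ)/α + 2)*Real.log 2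
      ≤ (ε*(α-(d:ℝ))/(2*d) - δ) * m := by
    rw [div_le_iff₀ hc3] at h10; linarith
  have hP3 : b + K * 2 ^ (jn:ℕ) / t * Real.log x < x := by
    have hR : K * 2 ^ (jn:ℕ) / t = Real.exp (Real.log K + A - ℓ) := by
      rw [Real.exp_sub, Real.exp_add, Real.exp_log hK, h2A, hℓdef, Real.exp_log ht0]
    have hqℓ : q * ℓ = Real.exp (Real.log q + m) := by
      rw [Real.exp_add, Real.exp_log hq, hmdef, Real.exp_log hℓ0]
    have hlogx_qℓ : Real.log x ≤ q * ℓ := by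
      have hp1 : 0 ≤ q*m := by positivity
      have hp2 : 0 ≤ (ε/2)*m := by positivity
      have hup : ((d:ℝ)/α)*φ ≤ q*ℓ := by rw [hφids]; linarith
      linarith [hlogx_up]
    have hprod : K * 2 ^ (jn:ℕ) / t * Real.log x
        ≤ Real.exp (Real.log K + A - ℓ + (Real.log q + m)) := by
      rw [Real.exp_add, ← hR, ← hqℓ]
      apply mul_le_mul_of_nonneg_left hlogx_qℓ (by positivity)
    have hexp : Real.log K + A - ℓ + (Real.log q + m) ≤ Real.log x - Real.log 2 := by
      have hφe : φ - ℓ = q*ℓ - (q+1)*m - G*m := by rw [hφdef]; ring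
      have hGm : (G - ε/2)*m = (ε*(α-(d:ℝ))/(2*d))*m := by rw [hGε]
      linarith [hlogx_low, hA_up, h10', hφe, hGm]
    have hfin : K * 2 ^ (jn:ℕ) / t * Real.log x ≤ x / 2 := by
      calc K * 2 ^ (jn:ℕ) / t * Real.log x
          ≤ Real.exp (Real.log K + A - ℓ + (Real.log q + m)) := hprod
        _ ≤ Real.exp (Real.log x - Real.log 2) := Real.exp_le_exp.2 hexp
        _ = x / 2 := by
            rw [Real.exp_sub, Real.exp_log hxpos, Real.exp_log (by norm_num : (0:ℝ) < 2)]
    linarith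
  exact ⟨h1, hj₀, hjge3, hP2, hP3, hMb⟩

theorem top_values_lower_bound
    {d : ℕ} (hd : 1 ≤ d) {α : ℝ} (hα : (d : ℝ) < α)
    {Ω : Type*} [MeasurableSpace Ω] (P : Measure Ω) [IsProbabilityMeasure P]
    (ξ : (Fin d → ℤ) → Ω → ℝ)
    (hmeas : ∀ z, Measurable (ξ z))
    (hindep : iIndepFun ξ P)
    (hpareto : ∀ z, IsPareto P α (ξ z))
    (Z1 : Ω → ℝ → Fin d → ℤ)
    (hZ1meas : Measurable (Function.uncurry Z1))
    (hZ1 : ∀ᵐ ω ∂P, ∀ t : ℝ, 0 < t →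
      ∀ z, Phi (fun x => ξ x ω) t z ≤ Phi (fun x => ξ x ω) t (Z1 ω t))
    (Z2 : Ω → ℝ → Fin d → ℤ)
    (hZ2meas : Measurable (Function.uncurry Z2))
    (hne12 : ∀ ω, ∀ t : ℝ, 0 < t → Z1 ω t ≠ Z2 ω t)
    (hZ2 : ∀ᵐ ω ∂P, ∀ t : ℝ, 0 < t →
      ∀ z, z ≠ Z1 ω t → Phi (fun x => ξ x ω) t z ≤ Phi (fun x => ξ x ω) t (Z2 ω t))
    (Z3 : Ω → ℝ → Fin d → ℤ)
    (hZ3meas : Measurable (Function.uncurry Z3))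
    (hne13 : ∀ ω, ∀ t : ℝ, 0 < t → Z1 ω t ≠ Z3 ω t)
    (hne23 : ∀ ω, ∀ t : ℝ, 0 < t → Z2 ω t ≠ Z3 ω t)
    (hZ3 : ∀ᵐ ω ∂P, ∀ t : ℝ, 0 < t →
      ∀ z, z ≠ Z1 ω t → z ≠ Z2 ω t → Phi (fun x => ξ x ω) t z ≤ Phi (fun x => ξ x ω) t (Z3 ω t))
    (ε : ℝ) (hε : 0 < ε) :
    ∀ᵐ ω ∂P, ∀ᶠ t in atTop, ∀ Z ∈ [Z1, Z2, Z3],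
      amt d α t * Real.log t ^ (-ε) < Phi (fun x => ξ x ω) t (Z ω t) ∧
      amt d α t * Real.log t ^ (-ε) < ξ (Z ω t) ω := by
  classical
  have hd1 : (1:ℝ) ≤ d := by exact_mod_cast hd
  have hα0 : (0:ℝ) < α := by linarith
  set ε' := min ε 1 with hε'def
  have hε'pos : 0 < ε' := lt_min hε one_pos
  have hε'1 : ε' ≤ 1 := min_le_right _ _
  have hε'ε : ε' ≤ ε := min_le_left _ _
  set i0 : Fin d := ⟨0, hd⟩ with hi0
  have hξ1 : ∀ᵐ ω ∂P, ∀ z : Fin d → ℤ, 1 ≤ ξ z ω := by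
    rw [ae_all_iff]
    intro z
    have hz : P {ω | ξ z ω < 1} = 0 := by
      have hcup : {ω | ξ z ω < 1} = ⋃ n : ℕ, {ω | ξ z ω ≤ 1 - 1/((n:ℝ)+1)} := by
        ext ω
        simp only [Set.mem_setOf_eq, Set.mem_iUnion]
        constructor
        · intro h
          obtain ⟨n, hn⟩ := exists_nat_one_div_lt (by linarith : (0:ℝ) < 1 - ξ z ω)
          exact ⟨n, by push_cast at hn ⊢; linarith⟩
        · rintro ⟨n, hn⟩
          have : (0:ℝ) < 1/((n:ℝ)+1) := by positivity
          linarith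
      rw [hcup]
      refine measure_iUnion_null fun n => (hpareto z).2 _ ?_
      have : (0:ℝ) < 1/((n:ℝ)+1) := by positivity
      linarith
    rw [ae_iff]
    have : {ω | ¬ 1 ≤ ξ z ω} = {ω | ξ z ω < 1} := by
      ext ω; simp [not_le]
    rw [this]
    exact hz
  have hboxhit := box_hit i0 hα hd P ξ hindep hpareto
  filter_upwards [hZ1, hZ2, hZ3, hξ1, hboxhit] with ω hω1 hω2 hω3 hωξ hωbox
  obtain ⟨j₀, hj₀⟩ := eventually_atTop.1 hωbox
  have hev := eventual_conditions hd hα hε'pos hε'1 j₀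
  have hev2 : ∀ᶠ t : ℝ in atTop, 1 ≤ Real.log t :=
    Real.tendsto_log_atTop.eventually_ge_atTop 1
  filter_upwards [hev, hev2] with t hevt hℓ1
  obtain ⟨ht3, hjj0, hj3, hP2, hP3, hP4⟩ := hevt
  set jn := jfun d α ε' t with hjn
  set x := xthr α d jn with hx
  have ht0 : (0:ℝ) < t := by linarith
  set b' := amt d α t * Real.log t ^ (-ε') with hb'
  have hamt0 : 0 ≤ amt d α t := by
    have : amt d α t = (t / Real.log t) ^ qex d α := rfl
    rw [this]
    exact Real.rpow_nonneg (div_nonneg ht0.le (by linarith)) _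
  have hble : amt d α t * Real.log t ^ (-ε) ≤ b' := by
    rw [hb']
    apply mul_le_mul_of_nonneg_left _ hamt0
    exact Real.rpow_le_rpow_of_exponent_le hℓ1 (by linarith : -ε ≤ -ε')
  have hM : (3:ℝ)^d * (1 + (d:ℝ) * Real.log 3) ≤ b' := hP4
  have hb'0 : 0 < b' := by
    have hlog3 : (0:ℝ) ≤ Real.log 3 := Real.log_nonneg (by norm_num)
    calc (0:ℝ) < 3^d * (1 + (d:ℝ) * Real.log 3) := by positivity
      _ ≤ b' := hM
  have hx1 : 1 ≤ x := xthr_one_le hα0 hd hj3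
  have hlogx0 : 0 ≤ Real.log x := Real.log_nonneg hx1
  have hwit : ∀ c : Fin 3, ∃ z ∈ box i0 jn c, x < ξ z ω := hj₀ jn hjj0
  choose w hwmem hwlt using hwit
  have hKnorm : ∀ c, norm1 (w c) ≤ ((d:ℝ)+7) * 2^(jn:ℕ) := by
    intro c
    have h := box_norm_le i0 jn c (w c) (hwmem c)
    unfold norm1
    calc (normZ (w c) : ℝ) ≤ (((d+7)*2^jn : ℕ) : ℝ) := by exact_mod_cast h
      _ = ((d:ℝ)+7)*2^(jn:ℕ) := by push_cast; ring
  have hnorm0 : ∀ c, 0 ≤ norm1 (w c) := by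
    intro c; unfold norm1; positivity
  have hPhiw : ∀ c : Fin 3, b' < Phi (fun y => ξ y ω) t (w c) := by
    intro c
    have hxw : x ≤ ξ (w c) ω := (hwlt c).le
    have hn1 : norm1 (w c) ≤ t * ξ (w c) ω := by
      calc norm1 (w c) ≤ ((d:ℝ)+7)*2^(jn:ℕ) := hKnorm c
        _ ≤ t * x := hP2
        _ ≤ t * ξ (w c) ω := mul_le_mul_of_nonneg_left hxw ht0.le
    have hPhieq : Phi (fun y => ξ y ω) t (w c)
        = ξ (w c) ω - norm1 (w c) / t * Real.log (ξ (w c) ω) + eta (w c) / t := by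
      unfold Phi
      rw [if_pos hn1]
    rw [hPhieq]
    have hc0 : 0 ≤ norm1 (w c) / t := div_nonneg (hnorm0 c) ht0.le
    have hcx : norm1 (w c) / t ≤ x := by
      rw [div_le_iff₀ ht0]
      calc norm1 (w c) ≤ ((d:ℝ)+7)*2^(jn:ℕ) := hKnorm c
        _ ≤ t * x := hP2
        _ = x * t := mul_comm _ _
    have hmono := sub_log_mono hc0 hcx hx1 hxw
    have hKc : (norm1 (w c) / t) * Real.log x ≤ (((d:ℝ)+7)*2^(jn:ℕ)/t) * Real.log x := by
      apply mul_le_mul_of_nonneg_right _ hlogx0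
      exact (div_le_div_iff_of_pos_right ht0).2 (hKnorm c)
    have heta : 0 ≤ eta (w c) / t := div_nonneg (eta_nonneg _) ht0.le
    linarith [hmono, hKc, heta, hP3]
  have hwne : ∀ c c' : Fin 3, w c = w c' → c = c' := by
    intro c c' h
    exact box_inj i0 jn (h ▸ hwmem c) (hwmem c')
  have hZ1t : b' < Phi (fun y => ξ y ω) t (Z1 ω t) :=
    lt_of_lt_of_le (hPhiw 0) (hω1 t ht0 (w 0))
  have hZ2t : b' < Phi (fun y => ξ y ω) t (Z2 ω t) := by
    by_cases h0 : w 0 = Z1 ω t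
    · have h1 : w 1 ≠ Z1 ω t := by
        intro h
        exact absurd (hwne 0 1 (h0.trans h.symm)) (by decide)
      exact lt_of_lt_of_le (hPhiw 1) (hω2 t ht0 (w 1) h1)
    · exact lt_of_lt_of_le (hPhiw 0) (hω2 t ht0 (w 0) h0)
  have hZ3t : b' < Phi (fun y => ξ y ω) t (Z3 ω t) := by
    have hex : ∃ c : Fin 3, w c ≠ Z1 ω t ∧ w c ≠ Z2 ω t := by
      by_contra hco
      push_neg at hco
      have hall : ∀ c : Fin 3, w c = Z1 ω t ∨ w c = Z2 ω t := by
        intro c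
        by_cases hc : w c = Z1 ω t
        · exact Or.inl hc
        · exact Or.inr (hco c hc)
      rcases hall 0 with e0|e0 <;> rcases hall 1 with e1|e1 <;> rcases hall 2 with e2|e2 <;>
        first
          | exact absurd (hwne 0 1 (e0.trans e1.symm)) (by decide)
          | exact absurd (hwne 0 2 (e0.trans e2.symm)) (by decide)
          | exact absurd (hwne 1 2 (e1.trans e2.symm)) (by decide)
    obtain ⟨c, hc1, hc2⟩ := hex
    exact lt_of_lt_of_le (hPhiw c) (hω3 t ht0 (w c) hc1 hc2)
  intro Z hZmem
  have hξZ1 : b' < ξ (Z1 ω t) ω := lt_xi_of_lt_Phi ht0 (hωξ _) hM hZ1t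
  have hξZ2 : b' < ξ (Z2 ω t) ω := lt_xi_of_lt_Phi ht0 (hωξ _) hM hZ2t
  have hξZ3 : b' < ξ (Z3 ω t) ω := lt_xi_of_lt_Phi ht0 (hωξ _) hM hZ3t
  simp only [List.mem_cons, List.not_mem_nil, or_false] at hZmem
  rcases hZmem with rfl | rfl | rfl
  · exact ⟨lt_of_le_of_lt hble hZ1t, lt_of_le_of_lt hble hξZ1⟩
  · exact ⟨lt_of_le_of_lt hble hZ2t, lt_of_le_of_lt hble hξZ2⟩
  · exact ⟨lt_of_le_of_lt hble hZ3t, lt_of_le_of_lt hble hξZ3⟩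


end PAM
end
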